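/- arXiv:2603.05376 — 7 statements merged into one kernel-verified Lean document; each statement's English description precedes it below -/
import Mathlib

section
/- Let H be a real Hilbert space, let ρ ∈ (0,∞], and let S ⊆ H be a nonempty closed ρ-uniformly prox-regular set. Then S is connected if and only if S is path-connected. -/
open MeasureTheory Set Metric Filter Topology
open scoped RealInnerProductSpace ENNReal

/-- The proximal normal cone of `S` at `x`: `ζ ∈ N^P(S;x)` iff there are `σ ≥ 0`, `η > 0`
with `⟪ζ, y - x⟫ ≤ σ‖y - x‖²` for all `y ∈ S` with `‖y - x‖ < η`. -/
def ProxNormalCone {H : Type*} [NormedAddCommGroup H] [InnerProductSpace ℝ H]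
    (S : Set H) (x : H) : Set H :=
  {ζ : H | ∃ σ : ℝ, 0 ≤ σ ∧ ∃ η : ℝ, 0 < η ∧
    ∀ y ∈ S, ‖y - x‖ < η → ⟪ζ, y - x⟫ ≤ σ * ‖y - x‖ ^ 2}

/-- `ρ`-uniform prox-regularity, with `ρ ∈ (0,∞]` encoded in `ℝ≥0∞`.
For `ρ = ∞` one has `‖ζ‖ / (2 * ρ.toReal) = ‖ζ‖ / 0 = 0`, recovering the convex inequality. -/
def UniformlyProxRegular {H : Type*} [NormedAddCommGroup H] [InnerProductSpace ℝ H]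
    (ρ : ℝ≥0∞) (S : Set H) : Prop :=
  ∀ x ∈ S, ∀ ζ ∈ ProxNormalCone S x, ∀ x' ∈ S,
    ⟪ζ, x' - x⟫ ≤ ‖ζ‖ / (2 * ρ.toReal) * ‖x' - x‖ ^ 2

/-- Lower semicontinuity of a set-valued map on a set `A`: for every `a ∈ A` and open `U`
meeting `C a`, the set of points of `A` where `C` meets `U` is a neighborhood of `a` in `A`. -/
def LscOn {α β : Type*} [TopologicalSpace α] [TopologicalSpace β]
    (C : α → Set β) (A : Set α) : Prop :=
  ∀ a ∈ A, ∀ U : Set β, IsOpen U → (C a ∩ U).Nonempty →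
    {a' | a' ∈ A ∧ (C a' ∩ U).Nonempty} ∈ nhdsWithin a A

/-- Admissible trajectory for a moving set `C` on `[0,T]`: right-continuous, of bounded
variation, with `x 0 ∈ C 0` and `x t ∈ C t` for all `t ∈ [0,T]`. -/
def AdmissibleTrajectory {E : Type*} [NormedAddCommGroup E]
    (C : ℝ → Set E) (T : ℝ) (x : ℝ → E) : Prop :=
  (∀ t ∈ Icc (0:ℝ) T, ContinuousWithinAt x (Ici t) t) ∧
    BoundedVariationOn x (Icc (0:ℝ) T) ∧ x 0 ∈ C 0 ∧ ∀ t ∈ Icc (0:ℝ) T, x t ∈ C t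

/-- The differential measure `dx` is absolutely continuous w.r.t. `ν` with density
`v ∈ L¹_ν`: `x t = x 0 + ∫_{(0,t]} v dν` for all `t ∈ [0,T]`. -/
def HasDensity {E : Type*} [NormedAddCommGroup E] [NormedSpace ℝ E]
    (T : ℝ) (ν : Measure ℝ) (x v : ℝ → E) : Prop :=
  Integrable v ν ∧ ∀ t ∈ Icc (0:ℝ) T, x t = x 0 + ∫ s in Ioc (0:ℝ) t, v s ∂ν

/-- A (complete) positive Radon measure on `[0,T]`: a finite inner regular Borel measure
carried by `[0,T]`. -/
def IsRadonOn (ν : Measure ℝ) (T : ℝ) : Prop :=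
  IsFiniteMeasure ν ∧ ν.InnerRegular ∧ ν ((Icc (0:ℝ) T)ᶜ) = 0

/-- The bounded selection-extension property (H₃). -/
def SelectionExtension {E : Type*} [NormedAddCommGroup E] (C : ℝ → Set E) (T : ℝ) : Prop :=
  ∀ x : ℝ → E, (∃ M : ℝ, ∀ t ∈ Icc (0:ℝ) T, ‖x t‖ ≤ M) →
    (∀ t ∈ Icc (0:ℝ) T, x t ∈ C t) → ∀ η : ℝ, 0 < η →
    ∃ R : ℝ, 0 < R ∧
      ∀ K : Set ℝ, IsCompact K → K ⊆ Icc (0:ℝ) T →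
        ∀ y : ℝ → E, ContinuousOn y K → (∀ t ∈ K, y t ∈ C t) →
          (∀ t ∈ K, ‖y t - x t‖ ≤ η) →
          ∃ ybar : ℝ → E, ContinuousOn ybar (Icc (0:ℝ) T) ∧
            (∀ t ∈ Icc (0:ℝ) T, ybar t ∈ C t) ∧ (∀ t ∈ K, ybar t = y t) ∧
            ∀ t ∈ Icc (0:ℝ) T, ‖ybar t‖ ≤ R

/-- Hypothesis (H₁): each `C t` is nonempty, closed, connected and `ρ`-uniformly prox-regular. -/
def HypH1 {H : Type*} [NormedAddCommGroup H] [InnerProductSpace ℝ H]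
    (ρ : ℝ≥0∞) (C : ℝ → Set H) (T : ℝ) : Prop :=
  ∀ t ∈ Icc (0:ℝ) T, (C t).Nonempty ∧ IsClosed (C t) ∧ IsConnected (C t) ∧
    UniformlyProxRegular ρ (C t)

/-!
A connected space all of whose path components are open is path-connected, so it suffices to
show that `S` is locally path-connected. In a complete metric space this holds as soon as any two
points at distance `d ≤ r` have an approximate midpoint, a point within `c d` of both for a fixed
`c < 1`: refining dyadically and passing to the limit gives a path from `x` to `y` that stays
within `d / (1 - c)` of `x`.

In a uniformly prox-regular set, an approximate midpoint of `x, y ∈ S` is the nearest point `p`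
of `S` to a point `v` close to the midpoint of `x` and `y`; such `v` exist because the points
having a nearest point in a closed subset of a Hilbert space are dense (a Borwein–Preiss
argument). Prox-regularity applied to the proximal normal `v - p` keeps `p` within `3/4 ‖x - y‖`
of `x` and of `y` once `‖x - y‖ ≤ ρ / 2`.
-/

lemma Metric.uniformContinuous_of_dist_le_add_mul {α β : Type*} [PseudoMetricSpace α]
    [PseudoMetricSpace β] {g : α → β} {a b : ℕ → ℝ} (ha : Tendsto a atTop (𝓝 0))
    (h : ∀ n x y, dist (g x) (g y) ≤ a n + b n * dist x y) : UniformContinuous g := by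
  refine Metric.uniformContinuous_iff.2 fun ε hε => ?_
  obtain ⟨n, hn⟩ := (ha.eventually (gt_mem_nhds (half_pos hε))).exists
  refine ⟨ε / 2 / (|b n| + 1), by positivity, fun {x y} hxy => (h n x y).trans_lt ?_⟩
  have hb : b n * dist x y ≤ (|b n| + 1) * dist x y := by
    gcongr; exact (le_abs_self _).trans (le_add_of_nonneg_right zero_le_one)
  rw [lt_div_iff₀ (by positivity), mul_comm] at hxy
  linarith

lemma dist_le_mul_of_dist_succ_le {X : Type*} [PseudoMetricSpace X] {s : ℕ → X} {D : ℝ}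
    (hs : ∀ k, dist (s k) (s (k + 1)) ≤ D) {m n : ℕ} (hmn : m ≤ n) :
    dist (s m) (s n) ≤ (n - m) * D := by
  have h := dist_le_Ico_sum_of_dist_le hmn fun {k} _ _ => hs k
  rwa [Finset.sum_const, Nat.card_Ico, nsmul_eq_mul, Nat.cast_sub hmn] at h

lemma Nat.cast_floor_sub_floor_le {a s t : ℝ} (ha : 0 ≤ a) (ht : 0 ≤ t) (hts : t ≤ s) :
    ⌊a * t⌋₊ ≤ ⌊a * s⌋₊ ∧ (⌊a * s⌋₊ - ⌊a * t⌋₊ : ℝ) ≤ a * (s - t) + 1 := by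
  refine ⟨Nat.floor_le_floor (by gcongr), ?_⟩
  have h₁ := Nat.floor_le (mul_nonneg ha (ht.trans hts))
  have h₂ := Nat.lt_floor_add_one (a * t)
  nlinarith

section DyadicPaths

variable {X : Type*} (mid : X → X → X) (x y : X)

def dyadicRefine (z : ℕ → X) (k : ℕ) : X :=
  if Even k then z (k / 2) else mid (z (k / 2)) (z (k / 2 + 1))

lemma dyadicRefine_two_mul (z : ℕ → X) (k : ℕ) : dyadicRefine mid z (2 * k) = z k := by
  simp [dyadicRefine]

lemma dyadicRefine_two_mul_add_one (z : ℕ → X) (k : ℕ) :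
    dyadicRefine mid z (2 * k + 1) = mid (z k) (z (k + 1)) := by
  simp [dyadicRefine, Nat.add_div]

-- `dyadicPoints mid x y n k` is the point attached to the dyadic number `k / 2ⁿ`.
def dyadicPoints (n : ℕ) : ℕ → X :=
  (dyadicRefine mid)^[n] fun k => if k = 0 then x else y

lemma dyadicPoints_succ (n : ℕ) :
    dyadicPoints mid x y (n + 1) = dyadicRefine mid (dyadicPoints mid x y n) :=
  Function.iterate_succ_apply' ..

lemma dyadicPoints_zero (n : ℕ) : dyadicPoints mid x y n 0 = x := by
  induction n with
  | zero => rfl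
  | succ n ih => simpa [dyadicPoints_succ, dyadicRefine] using ih

lemma dyadicPoints_two_pow (n : ℕ) : dyadicPoints mid x y n (2 ^ n) = y := by
  induction n with
  | zero => rfl
  | succ n ih => rw [dyadicPoints_succ, pow_succ', dyadicRefine_two_mul, ih]

noncomputable def dyadicStep (n : ℕ) (t : ℝ) : X :=
  dyadicPoints mid x y n ⌊2 ^ n * t⌋₊

lemma dyadicStep_zero (n : ℕ) : dyadicStep mid x y n 0 = x := by
  simp [dyadicStep, dyadicPoints_zero]

lemma dyadicStep_one (n : ℕ) : dyadicStep mid x y n 1 = y := by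
  rw [dyadicStep, mul_one, ← Nat.cast_ofNat, ← Nat.cast_pow, Nat.floor_natCast,
    dyadicPoints_two_pow]

variable [PseudoMetricSpace X] {mid x y} {c r : ℝ}

def IsApproxMidpointMap (c r : ℝ) (mid : X → X → X) : Prop :=
  ∀ a b, dist a b ≤ r → dist (mid a b) a ≤ c * dist a b ∧ dist (mid a b) b ≤ c * dist a b

lemma dist_dyadicRefine_le (hc : 0 ≤ c) (hmid : IsApproxMidpointMap c r mid) {z : ℕ → X}
    {D : ℝ} (hz : ∀ k, dist (z k) (z (k + 1)) ≤ D) (hD : D ≤ r) (k : ℕ) :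
    dist (dyadicRefine mid z k) (dyadicRefine mid z (k + 1)) ≤ c * D ∧
      dist (dyadicRefine mid z k) (z (k / 2)) ≤ c * D := by
  have hmid' (j : ℕ) := hmid (z j) (z (j + 1)) ((hz j).trans hD)
  have hcD (j : ℕ) : c * dist (z j) (z (j + 1)) ≤ c * D := by gcongr; exact hz j
  obtain ⟨j, rfl | rfl⟩ := k.even_or_odd'
  · rw [dyadicRefine_two_mul, dyadicRefine_two_mul_add_one, Nat.mul_div_cancel_left _ two_pos,
      dist_self, dist_comm]
    exact ⟨(hmid' j).1.trans (hcD j), mul_nonneg hc (dist_nonneg.trans (hz 0))⟩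
  · rw [show 2 * j + 1 + 1 = 2 * (j + 1) by ring, dyadicRefine_two_mul,
      dyadicRefine_two_mul_add_one, show (2 * j + 1) / 2 = j by omega]
    exact ⟨(hmid' j).2.trans (hcD j), (hmid' j).1.trans (hcD j)⟩

lemma dist_dyadicPoints_le (hc₀ : 0 ≤ c) (hc₁ : c ≤ 1) (hmid : IsApproxMidpointMap c r mid)
    (hxy : dist x y ≤ r) (n k : ℕ) :
    dist (dyadicPoints mid x y n k) (dyadicPoints mid x y n (k + 1)) ≤ c ^ n * dist x y := by
  induction n generalizing k with
  | zero =>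
    rcases eq_or_ne k 0 with rfl | hk
    · simp [dyadicPoints]
    · simp [dyadicPoints, hk]
  | succ n ih =>
    rw [dyadicPoints_succ, pow_succ', mul_assoc]
    exact (dist_dyadicRefine_le hc₀ hmid ih
      ((mul_le_of_le_one_left dist_nonneg (pow_le_one₀ hc₀ hc₁)).trans hxy) k).1

lemma dist_dyadicPoints_succ_le (hc₀ : 0 ≤ c) (hc₁ : c ≤ 1) (hmid : IsApproxMidpointMap c r mid)
    (hxy : dist x y ≤ r) (n k : ℕ) :
    dist (dyadicPoints mid x y (n + 1) k) (dyadicPoints mid x y n (k / 2)) ≤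
      c ^ (n + 1) * dist x y := by
  rw [dyadicPoints_succ, pow_succ', mul_assoc]
  exact (dist_dyadicRefine_le hc₀ hmid (dist_dyadicPoints_le hc₀ hc₁ hmid hxy n)
    ((mul_le_of_le_one_left dist_nonneg (pow_le_one₀ hc₀ hc₁)).trans hxy) k).2

lemma dist_dyadicStep_succ_le (hc₀ : 0 ≤ c) (hc₁ : c ≤ 1) (hmid : IsApproxMidpointMap c r mid)
    (hxy : dist x y ≤ r) (n : ℕ) (t : ℝ) :
    dist (dyadicStep mid x y n t) (dyadicStep mid x y (n + 1) t) ≤ c * dist x y * c ^ n := by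
  have hfloor : ⌊2 ^ n * t⌋₊ = ⌊2 ^ (n + 1) * t⌋₊ / 2 := by
    rw [← Nat.floor_div_ofNat]; congr 1; ring
  rw [dist_comm, dyadicStep, dyadicStep, hfloor]
  convert dist_dyadicPoints_succ_le hc₀ hc₁ hmid hxy n _ using 1
  ring

lemma dist_dyadicStep_le (hc₀ : 0 ≤ c) (hc₁ : c ≤ 1) (hmid : IsApproxMidpointMap c r mid)
    (hxy : dist x y ≤ r) (n : ℕ) {s t : ℝ} (hs : 0 ≤ s) (ht : 0 ≤ t) :
    dist (dyadicStep mid x y n s) (dyadicStep mid x y n t) ≤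
      c ^ n * dist x y + (2 * c) ^ n * dist x y * dist s t := by
  wlog hts : t ≤ s generalizing s t
  · rw [dist_comm, dist_comm s]; exact this ht hs (le_of_not_ge hts)
  obtain ⟨hle, hfloor⟩ := Nat.cast_floor_sub_floor_le (by positivity : (0 : ℝ) ≤ 2 ^ n) ht hts
  rw [dist_comm]
  calc dist (dyadicStep mid x y n t) (dyadicStep mid x y n s)
      ≤ (⌊2 ^ n * s⌋₊ - ⌊2 ^ n * t⌋₊) * (c ^ n * dist x y) :=
        dist_le_mul_of_dist_succ_le (dist_dyadicPoints_le hc₀ hc₁ hmid hxy n) hle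
    _ ≤ (2 ^ n * (s - t) + 1) * (c ^ n * dist x y) := by gcongr
    _ = c ^ n * dist x y + (2 * c) ^ n * dist x y * dist s t := by
        rw [Real.dist_eq, abs_of_nonneg (sub_nonneg.2 hts), mul_pow]; ring

end DyadicPaths

theorem joinedIn_closedBall_of_approx_midpoints {X : Type*} [MetricSpace X] [CompleteSpace X]
    {c r : ℝ} (hc₀ : 0 ≤ c) (hc₁ : c < 1)
    (hmid : ∀ a b : X, dist a b ≤ r → ∃ z, dist z a ≤ c * dist a b ∧ dist z b ≤ c * dist a b)
    {x y : X} (hxy : dist x y ≤ r) : JoinedIn (closedBall x (dist x y / (1 - c))) x y := by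
  choose! mid hmid using hmid
  have hc : 0 < 1 - c := sub_pos.2 hc₁
  set δ := dist x y
  set f := dyadicStep mid x y
  have hf (t : ℝ) (n : ℕ) : dist (f n t) (f (n + 1) t) ≤ c * δ * c ^ n :=
    dist_dyadicStep_succ_le hc₀ hc₁.le hmid hxy n t
  choose γ hγ using fun t =>
    cauchySeq_tendsto_of_complete (cauchySeq_of_le_geometric c _ hc₁ (hf t))
  have htail (n : ℕ) (t : ℝ) : dist (f n t) (γ t) ≤ c * δ * c ^ n / (1 - c) :=
    dist_le_of_le_geometric_of_tendsto c _ hc₁ (hf t) (hγ t) n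
  have hγ₀ : γ 0 = x := tendsto_nhds_unique (hγ 0) (by simp [f, dyadicStep_zero])
  have hγ₁ : γ 1 = y := tendsto_nhds_unique (hγ 1) (by simp [f, dyadicStep_one])
  have hcont : UniformContinuous fun t : unitInterval => γ t := by
    set K := (2 * c / (1 - c) + 1) * δ with hK
    refine Metric.uniformContinuous_of_dist_le_add_mul (a := fun n => K * c ^ n)
      (b := fun n => (2 * c) ^ n * δ) ?_ fun n s t => ?_
    · simpa using (tendsto_pow_atTop_nhds_zero_of_lt_one hc₀ hc₁).const_mul K
    · calc dist (γ s) (γ t)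
          ≤ dist (f n s) (γ s) + dist (f n s) (f n t) + dist (f n t) (γ t) := by
            rw [dist_comm (f n s)]; exact dist_triangle4 _ _ _ _
        _ ≤ c * δ * c ^ n / (1 - c) + (c ^ n * δ + (2 * c) ^ n * δ * dist s t) +
            c * δ * c ^ n / (1 - c) := by
            gcongr
            · exact htail n s
            · exact dist_dyadicStep_le hc₀ hc₁.le hmid hxy n s.2.1 t.2.1
            · exact htail n t
        _ = _ := by rw [hK]; field_simp; ring
  refine ⟨⟨⟨fun t => γ t, hcont.continuous⟩, hγ₀, hγ₁⟩, fun t => ?_⟩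
  have h₀ : dist (f 0 t) x ≤ δ := by
    simp only [f, dyadicStep, dyadicPoints, Function.iterate_zero, id]
    split_ifs
    · rw [dist_self]; exact dist_nonneg
    · rw [dist_comm]
  rw [mem_closedBall]
  calc dist (γ t) x ≤ dist (f 0 t) (γ t) + dist (f 0 t) x := dist_triangle_left _ _ _
    _ ≤ c * δ * c ^ 0 / (1 - c) + δ := add_le_add (htail 0 t) h₀
    _ = δ / (1 - c) := by field_simp; ring

theorem locallyPathConnectedSpace_of_approx_midpoints {X : Type*} [MetricSpace X]
    [CompleteSpace X] {c r : ℝ} (hc₀ : 0 ≤ c) (hc₁ : c < 1) (hr : 0 < r)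
    (hmid : ∀ a b : X, dist a b ≤ r → ∃ z, dist z a ≤ c * dist a b ∧ dist z b ≤ c * dist a b) :
    LocallyPathConnectedSpace X := by
  refine locallyPathConnectedSpace_iff_pathComponentIn_mem_nhds.2 fun x u hu hxu => ?_
  obtain ⟨ε, hε, hball⟩ := Metric.isOpen_iff.1 hu x hxu
  have hc : 0 < 1 - c := sub_pos.2 hc₁
  refine Metric.mem_nhds_iff.2 ⟨min r (ε * (1 - c)), by positivity, fun y hy => ?_⟩
  rw [mem_ball, dist_comm, lt_min_iff] at hy
  refine (joinedIn_closedBall_of_approx_midpoints hc₀ hc₁ hmid hy.1.le).mono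
    ((closedBall_subset_ball ?_).trans hball)
  rw [div_lt_iff₀ hc]
  exact hy.2

lemma exists_forall_norm_sub_sq_le_add {E : Type*} [SeminormedAddCommGroup E] {S : Set E}
    (hne : S.Nonempty) (v : E) {η : ℝ} (hη : 0 < η) :
    ∃ p ∈ S, ∀ w ∈ S, ‖p - v‖ ^ 2 ≤ ‖w - v‖ ^ 2 + η := by
  have hbdd : BddBelow ((‖· - v‖ ^ 2) '' S) := ⟨0, by rintro _ ⟨w, -, rfl⟩; positivity⟩
  obtain ⟨_, ⟨p, hp, rfl⟩, hlt⟩ :=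
    exists_lt_of_csInf_lt (hne.image _) (lt_add_of_pos_right _ hη)
  exact ⟨p, hp, fun w hw => hlt.le.trans (by gcongr; exact csInf_le hbdd ⟨w, hw, rfl⟩)⟩

lemma isMinOn_of_tendsto_of_approx_nearest {E : Type*} [SeminormedAddCommGroup E] {S : Set E}
    {v p : ℕ → E} {η : ℕ → ℝ} {v₀ p₀ : E} (hv : Tendsto v atTop (𝓝 v₀))
    (hp : Tendsto p atTop (𝓝 p₀)) (hη : Tendsto η atTop (𝓝 0))
    (hnear : ∀ n, ∀ w ∈ S, ‖p n - v n‖ ^ 2 ≤ ‖w - v n‖ ^ 2 + η n) :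
    IsMinOn (‖· - v₀‖) S p₀ := by
  refine isMinOn_iff.2 fun w hw => (pow_le_pow_iff_left₀ (norm_nonneg _) (norm_nonneg _)
    two_ne_zero).1 ?_
  simpa using le_of_tendsto_of_tendsto' ((hp.sub hv).norm.pow 2)
    (((tendsto_const_nhds.sub hv).norm.pow 2).add hη) fun n => hnear n w hw

section Hilbert

variable {H : Type*} [NormedAddCommGroup H] [InnerProductSpace ℝ H]

lemma norm_sub_add_smul_sub_sq (w a b : H) (t : ℝ) :
    ‖w - (a + t • (b - a))‖ ^ 2 =
      (1 - t) * ‖w - a‖ ^ 2 + t * ‖w - b‖ ^ 2 - t * (1 - t) * ‖b - a‖ ^ 2 := by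
  have h₁ : w - (a + t • (b - a)) = (1 - t) • (w - a) + t • (w - b) := by module
  have h₂ : b - a = (w - a) - (w - b) := by abel
  rw [h₁, h₂, norm_add_sq_real, norm_sub_sq_real (w - a), norm_smul, norm_smul,
    real_inner_smul_left, real_inner_smul_right, Real.norm_eq_abs, Real.norm_eq_abs, mul_pow,
    mul_pow, sq_abs, sq_abs]
  ring

/-- The Borwein–Preiss step: moving the centre `v` a fraction `t` of the way towards an
`η`-approximate nearest point `p` forces every `η'`-approximate nearest point `p'` of the new
centre to lie within `√((η + η') / t)` of `p`. -/
lemma norm_sub_sq_le_of_approx_nearest {v p p' : H} {t η η' : ℝ} (ht₀ : 0 ≤ t) (ht₁ : t ≤ 1)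
    (hη : 0 ≤ η) (hp : ‖p - v‖ ^ 2 ≤ ‖p' - v‖ ^ 2 + η)
    (hp' : ‖p' - (v + t • (p - v))‖ ^ 2 ≤ ‖p - (v + t • (p - v))‖ ^ 2 + η') :
    t * ‖p' - p‖ ^ 2 ≤ η + η' ∧ ‖p' - (v + t • (p - v))‖ ^ 2 ≤ (1 - t) * ‖p - v‖ ^ 2 + η' := by
  have hpp : ‖p - (v + t • (p - v))‖ ^ 2 = (1 - t) ^ 2 * ‖p - v‖ ^ 2 := by
    rw [norm_sub_add_smul_sub_sq, sub_self, norm_zero]; ring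
  rw [hpp] at hp'
  refine ⟨?_, hp'.trans ?_⟩
  · rw [norm_sub_add_smul_sub_sq] at hp'
    nlinarith [mul_le_mul_of_nonneg_left hp (sub_nonneg.2 ht₁)]
  · nlinarith [mul_nonneg (mul_nonneg ht₀ (sub_nonneg.2 ht₁)) (sq_nonneg ‖p - v‖)]

lemma exists_seq_approx_nearest {S : Set H} (hne : S.Nonempty) (u : H) (t η : ℕ → ℝ)
    (hη : ∀ n, 0 < η n) :
    ∃ v p : ℕ → H, v 0 = u ∧ (∀ n, v (n + 1) = v n + t n • (p n - v n)) ∧ (∀ n, p n ∈ S) ∧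
      ∀ n, ∀ w ∈ S, ‖p n - v n‖ ^ 2 ≤ ‖w - v n‖ ^ 2 + η n := by
  choose P hPS hP using fun n v => exists_forall_norm_sub_sq_le_add hne v (hη n)
  let v : ℕ → H := fun n => Nat.rec u (fun n vn => vn + t n • (P n vn - vn)) n
  exact ⟨v, fun n => P n (v n), rfl, fun n => rfl, fun n => hPS n _, fun n => hP n _⟩

lemma dist_le_of_seq_approx_nearest {S : Set H} {v p : ℕ → H} {τ : ℝ} (hτ₀ : 0 < τ)
    (hτ₁ : τ ≤ 1) (hv : ∀ n, v (n + 1) = v n + (τ * (1 / 2) ^ n) • (p n - v n))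
    (hp : ∀ n, p n ∈ S) (hnear : ∀ n, ∀ w ∈ S, ‖p n - v n‖ ^ 2 ≤ ‖w - v n‖ ^ 2 + τ * (1 / 8) ^ n)
    (n : ℕ) : dist (p n) (p (n + 1)) ≤ 2 * (1 / 2) ^ n := by
  have h := (norm_sub_sq_le_of_approx_nearest (by positivity)
    (mul_le_one₀ hτ₁ (by positivity) (pow_le_one₀ (by norm_num) (by norm_num))) (by positivity)
    (hnear n _ (hp (n + 1))) (hv n ▸ hnear (n + 1) _ (hp n))).1
  have h8 (k : ℕ) : τ * (1 / 8) ^ k = τ * (1 / 2) ^ k * ((1 / 2) ^ k) ^ 2 := by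
    rw [mul_assoc, sq, ← mul_pow, ← mul_pow]; norm_num
  have hη : τ * (1 / 8) ^ (n + 1) ≤ τ * (1 / 8) ^ n := by
    gcongr τ * ?_
    exact pow_le_pow_of_le_one (by norm_num : (0 : ℝ) ≤ 1 / 8) (by norm_num) n.le_succ
  have h' : τ * (1 / 2) ^ n * ‖p (n + 1) - p n‖ ^ 2 ≤
      τ * (1 / 2) ^ n * (2 * ((1 / 2) ^ n) ^ 2) := by
    linarith [h8 n]
  rw [dist_comm, dist_eq_norm]
  refine (pow_le_pow_iff_left₀ (norm_nonneg _) (by positivity) two_ne_zero).1 ?_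
  nlinarith [le_of_mul_le_mul_left h' (by positivity)]

lemma norm_sub_le_of_seq_approx_nearest {S : Set H} {v p : ℕ → H} {τ B : ℝ} (hτ₀ : 0 < τ)
    (hτ₁ : τ ≤ 1) (hB : 1 ≤ B) (hv : ∀ n, v (n + 1) = v n + (τ * (1 / 2) ^ n) • (p n - v n))
    (hp : ∀ n, p n ∈ S) (hnear : ∀ n, ∀ w ∈ S, ‖p n - v n‖ ^ 2 ≤ ‖w - v n‖ ^ 2 + τ * (1 / 8) ^ n)
    (h₀ : ‖p 0 - v 0‖ ≤ B) (n : ℕ) : ‖p n - v n‖ ≤ B := by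
  induction n with
  | zero => exact h₀
  | succ n ih =>
    have ht₁ : τ * (1 / 2) ^ n ≤ 1 :=
      mul_le_one₀ hτ₁ (by positivity) (pow_le_one₀ (by norm_num) (by norm_num))
    have h := (norm_sub_sq_le_of_approx_nearest (by positivity) ht₁ (by positivity)
      (hnear n _ (hp (n + 1))) (hv n ▸ hnear (n + 1) _ (hp n))).2
    have hη : τ * (1 / 8) ^ (n + 1) ≤ τ * (1 / 2) ^ n := by
      gcongr
      exact (pow_le_pow_left₀ (by norm_num) (by norm_num) _).trans
        (pow_le_pow_of_le_one (by norm_num) (by norm_num) n.le_succ)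
    rw [← hv] at h
    refine (pow_le_pow_iff_left₀ (norm_nonneg _) (by positivity) two_ne_zero).1 ?_
    nlinarith [mul_le_mul_of_nonneg_left (pow_le_pow_left₀ (norm_nonneg _) ih 2) (sub_nonneg.2 ht₁),
      mul_le_mul_of_nonneg_left (one_le_pow₀ hB : 1 ≤ B ^ 2) (by positivity : 0 ≤ τ * (1 / 2) ^ n)]

theorem dense_setOf_exists_isMinOn_norm_sub [CompleteSpace H] {S : Set H} (hne : S.Nonempty)
    (hcl : IsClosed S) : Dense {v : H | ∃ p ∈ S, IsMinOn (‖· - v‖) S p} := by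
  obtain ⟨q, hq⟩ := hne
  refine Metric.dense_iff.2 fun u ε hε => ?_
  set B := ‖q - u‖ + 1
  have hB : 1 ≤ B := le_add_of_nonneg_left (norm_nonneg _)
  set τ := min 1 (ε / (4 * B))
  have hτ₀ : 0 < τ := lt_min one_pos (by positivity)
  have hτ₁ : τ ≤ 1 := min_le_left _ _
  -- the centre moves by `τ 2⁻ⁿ ‖p n - v n‖ ≤ τ 2⁻ⁿ B`, and the tolerance `τ 8⁻ⁿ` is small
  -- enough against the step `τ 2⁻ⁿ` to make `p` Cauchy
  obtain ⟨v, p, hv₀, hv, hp, hnear⟩ := exists_seq_approx_nearest ⟨q, hq⟩ u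
    (fun n => τ * (1 / 2) ^ n) (fun n => τ * (1 / 8) ^ n) fun n => by positivity
  have h₀ : ‖p 0 - v 0‖ ≤ B := by
    have h := hnear 0 q hq
    rw [hv₀, pow_zero, mul_one] at h
    rw [hv₀]
    refine (pow_le_pow_iff_left₀ (norm_nonneg _) (by positivity) two_ne_zero).1 ?_
    nlinarith [norm_nonneg (q - u)]
  have hv_dist (n : ℕ) : dist (v n) (v (n + 1)) ≤ τ * B * (1 / 2) ^ n := by
    rw [dist_eq_norm, hv, sub_add_cancel_left, norm_neg, norm_smul,
      Real.norm_of_nonneg (by positivity)]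
    calc τ * (1 / 2) ^ n * ‖p n - v n‖ ≤ τ * (1 / 2) ^ n * B := by
          gcongr; exact norm_sub_le_of_seq_approx_nearest hτ₀ hτ₁ hB hv hp hnear h₀ n
      _ = τ * B * (1 / 2) ^ n := by ring
  obtain ⟨p₀, hp_lim⟩ := cauchySeq_tendsto_of_complete (cauchySeq_of_le_geometric (1 / 2) 2
    (by norm_num) (dist_le_of_seq_approx_nearest hτ₀ hτ₁ hv hp hnear))
  obtain ⟨v₀, hv_lim⟩ := cauchySeq_tendsto_of_complete
    (cauchySeq_of_le_geometric _ _ (by norm_num) hv_dist)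
  have hη : Tendsto (fun n => τ * (1 / 8 : ℝ) ^ n) atTop (𝓝 0) := by
    simpa using (tendsto_pow_atTop_nhds_zero_of_lt_one (by norm_num : (0 : ℝ) ≤ 1 / 8)
      (by norm_num)).const_mul τ
  refine ⟨v₀, ?_, p₀, hcl.mem_of_tendsto hp_lim (.of_forall hp),
    isMinOn_of_tendsto_of_approx_nearest hv_lim hp_lim hη hnear⟩
  rw [mem_ball, dist_comm, ← hv₀]
  calc dist (v 0) v₀ ≤ τ * B / (1 - 1 / 2) :=
        dist_le_of_le_geometric_of_tendsto₀ _ _ (by norm_num) hv_dist hv_lim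
    _ ≤ ε / (4 * B) * B / (1 - 1 / 2) := by gcongr; exact min_le_right _ _
    _ < ε := by field_simp; linarith

end Hilbert

section ProxRegular

variable {H : Type*} [NormedAddCommGroup H] [InnerProductSpace ℝ H] {S : Set H} {ρ : ℝ≥0∞}

lemma sub_mem_proxNormalCone_of_isMinOn {v p : H} (hmin : IsMinOn (‖· - v‖) S p) :
    v - p ∈ ProxNormalCone S p := by
  refine ⟨1 / 2, by norm_num, 1, one_pos, fun w hw _ => ?_⟩
  have h : ‖p - v‖ ^ 2 ≤ ‖(w - p) - (v - p)‖ ^ 2 := by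
    rw [sub_sub_sub_cancel_right]; gcongr; exact isMinOn_iff.1 hmin w hw
  rw [norm_sub_rev p v, norm_sub_sq_real (w - p)] at h
  linarith [real_inner_comm (w - p) (v - p)]

lemma UniformlyProxRegular.of_toReal_eq_zero (hS : UniformlyProxRegular ρ S)
    (hρ : ρ.toReal = 0) (ρ' : ℝ≥0∞) : UniformlyProxRegular ρ' S := by
  intro x hx ζ hζ x' hx'
  refine (hS x hx ζ hζ x' hx').trans ?_
  rw [hρ, mul_zero, div_zero, zero_mul]
  positivity

lemma UniformlyProxRegular.exists_toReal_pos (hS : UniformlyProxRegular ρ S) :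
    ∃ ρ' : ℝ≥0∞, 0 < ρ'.toReal ∧ UniformlyProxRegular ρ' S := by
  rcases ENNReal.toReal_nonneg.eq_or_lt with hρ | hρ
  · exact ⟨1, by simp, hS.of_toReal_eq_zero hρ.symm 1⟩
  · exact ⟨ρ, hρ, hS⟩

lemma UniformlyProxRegular.mul_norm_sub_sq_le (hS : UniformlyProxRegular ρ S) {v p w : H}
    (hp : p ∈ S) (hmin : IsMinOn (‖· - v‖) S p) (hw : w ∈ S) :
    (1 - ‖v - p‖ / ρ.toReal) * ‖w - p‖ ^ 2 ≤ ‖w - v‖ ^ 2 := by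
  have h := hS p hp (v - p) (sub_mem_proxNormalCone_of_isMinOn hmin) w hw
  have hexp : ‖w - v‖ ^ 2 = ‖w - p‖ ^ 2 - 2 * ⟪v - p, w - p⟫ + ‖v - p‖ ^ 2 := by
    rw [← sub_sub_sub_cancel_right w v p, norm_sub_sq_real, real_inner_comm]
  have hcoef : ‖v - p‖ / (2 * ρ.toReal) * 2 = ‖v - p‖ / ρ.toReal := by
    rw [mul_comm 2, ← div_div, div_mul_cancel₀ _ two_ne_zero]
  nlinarith [sq_nonneg ‖v - p‖]

theorem UniformlyProxRegular.exists_approx_midpoint [CompleteSpace H]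
    (hS : UniformlyProxRegular ρ S) (hcl : IsClosed S) {x y : H} (hx : x ∈ S) (hy : y ∈ S)
    (hxy : dist x y ≤ ρ.toReal / 2) :
    ∃ z ∈ S, dist z x ≤ 3 / 4 * dist x y ∧ dist z y ≤ 3 / 4 * dist x y := by
  rcases eq_or_ne x y with rfl | hne
  · exact ⟨x, hx, by simp, by simp⟩
  set δ := dist x y
  have hδ : 0 < δ := dist_pos.2 hne
  set m := midpoint ℝ x y
  obtain ⟨v, hvm, p, hp, hmin⟩ := Metric.dense_iff.1
    (dense_setOf_exists_isMinOn_norm_sub ⟨x, hx⟩ hcl) m (δ / 10) (by positivity)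
  rw [mem_ball] at hvm
  have hfar (w : H) (hw : w ∈ S) (hwm : dist w m = δ / 2) : dist p w ≤ 3 / 4 * δ := by
    have hwv : ‖w - v‖ ≤ 3 / 5 * δ := by
      rw [← dist_eq_norm]; linarith [dist_triangle w m v, dist_comm m v]
    have hpv : ‖v - p‖ ≤ 3 / 5 * δ := by
      rw [norm_sub_rev]; exact (isMinOn_iff.1 hmin w hw).trans hwv
    have hcoef : 7 / 10 ≤ 1 - ‖v - p‖ / ρ.toReal := by
      rw [le_sub_comm, div_le_iff₀ (by linarith)]; nlinarith
    have h := hS.mul_norm_sub_sq_le hp hmin hw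
    rw [dist_comm, dist_eq_norm]
    refine (pow_le_pow_iff_left₀ (norm_nonneg _) (by positivity) two_ne_zero).1 ?_
    -- `(3/5)² / (7/10) < (3/4)²`
    nlinarith [sq_nonneg ‖w - p‖, pow_le_pow_left₀ (norm_nonneg _) hwv 2]
  exact ⟨p, hp, hfar x hx (by simp [m, δ]; ring), hfar y hy (by simp [m, δ]; ring)⟩

end ProxRegular

theorem proxRegular_isConnected_iff_isPathConnected_general
    {H : Type*} [NormedAddCommGroup H] [InnerProductSpace ℝ H] [CompleteSpace H]
    (ρ : ℝ≥0∞) (S : Set H) (hScl : IsClosed S)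
    (hSpr : UniformlyProxRegular ρ S) :
    IsConnected S ↔ IsPathConnected S := by
  obtain ⟨ρ', hρ', hS⟩ := hSpr.exists_toReal_pos
  have := hScl.completeSpace_coe
  have : LocallyPathConnectedSpace S :=
    locallyPathConnectedSpace_of_approx_midpoints (c := 3 / 4) (r := ρ'.toReal / 2)
      (by norm_num) (by norm_num) (by positivity) fun a b hab => by
        obtain ⟨z, hz, hza, hzb⟩ := hS.exists_approx_midpoint hScl a.2 b.2 hab
        exact ⟨⟨z, hz⟩, hza, hzb⟩
  rw [isConnected_iff_connectedSpace, isPathConnected_iff_pathConnectedSpace,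
    pathConnectedSpace_iff_connectedSpace]

/-- A nonempty closed `ρ`-uniformly prox-regular subset of a Hilbert space
is connected if and only if it is path-connected. -/
theorem proxRegular_isConnected_iff_isPathConnected
    {H : Type*} [NormedAddCommGroup H] [InnerProductSpace ℝ H] [CompleteSpace H]
    (ρ : ℝ≥0∞) (hρ : 0 < ρ) (S : Set H) (hSne : S.Nonempty) (hScl : IsClosed S)
    (hSpr : UniformlyProxRegular ρ S) :
    IsConnected S ↔ IsPathConnected S :=
  proxRegular_isConnected_iff_isPathConnected_general ρ S hScl hSpr
end

section
/- Let H be a real Hilbert space, let T > 0, and let C : [0,T] ⇉ H be a lower semicontinuous set-valued map. Let K ⊆ [0,T] be compact and let y : K → H be continuous with y(t) ∈ C(t) for all t ∈ K. Define D(t) := {y(t)} for t ∈ K and D(t) := C(t) for t ∈ [0,T] \ K. Then D is lower semicontinuous on [0,T]. -/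
open MeasureTheory Set Metric Filter Topology
open scoped RealInnerProductSpace ENNReal

open Classical in
/-- **patching lemma.** If `C` is lower semicontinuous on `[0,T]`, `K ⊆ [0,T]`
is compact, and `y` is a continuous selection of `C` on `K`, then the map equal to `{y t}`
on `K` and to `C t` off `K` is lower semicontinuous on `[0,T]`. -/
theorem patched_map_lsc
    {H : Type*} [NormedAddCommGroup H] [InnerProductSpace ℝ H] [CompleteSpace H]
    (T : ℝ) (hT : 0 < T) (C : ℝ → Set H) (hC : LscOn C (Icc (0:ℝ) T))
    (K : Set ℝ) (hK : IsCompact K) (hKsub : K ⊆ Icc (0:ℝ) T)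
    (y : ℝ → H) (hy : ContinuousOn y K) (hysel : ∀ t ∈ K, y t ∈ C t) :
    LscOn (fun t => if t ∈ K then {y t} else C t) (Icc (0:ℝ) T) := by
  intro a ha U hU hne
  by_cases haK : a ∈ K
  · simp only [if_pos haK] at hne
    obtain ⟨z, hz, hzU⟩ := hne
    rw [mem_singleton_iff] at hz; subst hz
    have hyC : (C a ∩ U).Nonempty := ⟨y a, hysel a haK, hzU⟩
    have h1 := hC a ha U hU hyC
    have h2 : y ⁻¹' U ∈ nhdsWithin a K :=
      (hy a haK).preimage_mem_nhdsWithin (hU.mem_nhds hzU)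
    obtain ⟨W, hWopen, haW, hWsub⟩ := mem_nhdsWithin.mp h2
    have h3 : W ∈ nhdsWithin a (Icc 0 T) :=
      mem_nhdsWithin_of_mem_nhds (hWopen.mem_nhds haW)
    filter_upwards [h1, h3] with t ht1 htW
    refine ⟨ht1.1, ?_⟩
    by_cases htK : t ∈ K
    · simp only [if_pos htK]
      exact ⟨y t, rfl, hWsub ⟨htW, htK⟩⟩
    · simp only [if_neg htK]; exact ht1.2
  · simp only [if_neg haK] at hne
    have h1 := hC a ha U hU hne
    have h2 : Kᶜ ∈ nhdsWithin a (Icc 0 T) :=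
      mem_nhdsWithin_of_mem_nhds (hK.isClosed.isOpen_compl.mem_nhds haK)
    filter_upwards [h1, h2] with t ht1 ht2
    refine ⟨ht1.1, ?_⟩
    simp only [if_neg ht2]; exact ht1.2
end

section
/- Let H be a real Hilbert space, T > 0, and let C : [0,T] ⇉ H be a lower semicontinuous set-valued map such that for every t ∈ [0,T] the set C(t) is nonempty, closed, and convex. Then C satisfies the bounded selection-extension property (H₃): for every bounded map x : [0,T] → H with x(t) ∈ C(t) for all t and every η > 0, there exists R > 0 such that for every compact K ⊆ [0,T] and every continuous y : K → H with y(t) ∈ C(t) for all t ∈ K and sup_{t∈K}‖y(t) − x(t)‖ ≤ η, there is a continuous ȳ : [0,T] → H with ȳ(t) ∈ C(t) for all t ∈ [0,T], ȳ = y on K, and sup_{t∈[0,T]}‖ȳ(t)‖ ≤ R. -/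
open MeasureTheory Set Metric Filter Topology
open scoped RealInnerProductSpace ENNReal

set_option linter.unusedSectionVars false

section MichaelAux

variable {X : Type*} [MetricSpace X] [CompactSpace X]
variable {E : Type*} [NormedAddCommGroup E] [NormedSpace ℝ E] [CompleteSpace E]

/-- Lower semicontinuity of a set-valued map on the whole space. -/
def LscAux {α β : Type*} [TopologicalSpace α] [TopologicalSpace β] (C : α → Set β) : Prop :=
  ∀ a, ∀ U : Set β, IsOpen U → (C a ∩ U).Nonempty → {a' | (C a' ∩ U).Nonempty} ∈ 𝓝 a

theorem approx_selection (Φ : X → Set E) (hlsc : LscAux Φ) (hne : ∀ x, (Φ x).Nonempty)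
    (hconv : ∀ x, Convex ℝ (Φ x)) {ε : ℝ} (hε : 0 < ε) :
    ∃ f : C(X, E), ∀ x, ∃ z ∈ Φ x, dist (f x) z ≤ ε := by
  have H := exists_continuous_forall_mem_convex_of_local_const
    (t := fun x => {v : E | ∃ z ∈ Φ x, dist v z ≤ ε}) ?_ ?_
  · obtain ⟨g, hg⟩ := H
    exact ⟨g, hg⟩
  · intro x v1 hv1 v2 hv2 a b ha hb hab
    obtain ⟨z1, hz1, hd1⟩ := hv1
    obtain ⟨z2, hz2, hd2⟩ := hv2
    refine ⟨a • z1 + b • z2, hconv x hz1 hz2 ha hb hab, ?_⟩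
    rw [dist_eq_norm] at hd1 hd2 ⊢
    calc ‖a • v1 + b • v2 - (a • z1 + b • z2)‖
        = ‖a • (v1 - z1) + b • (v2 - z2)‖ := by
          rw [smul_sub, smul_sub, add_sub_add_comm]
      _ ≤ ‖a • (v1 - z1)‖ + ‖b • (v2 - z2)‖ := norm_add_le _ _
      _ = a * ‖v1 - z1‖ + b * ‖v2 - z2‖ := by
          rw [norm_smul, norm_smul, Real.norm_of_nonneg ha, Real.norm_of_nonneg hb]
      _ ≤ a * ε + b * ε := by
          exact add_le_add (mul_le_mul_of_nonneg_left hd1 ha) (mul_le_mul_of_nonneg_left hd2 hb)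
      _ = ε := by rw [← add_mul, hab, one_mul]
  · intro x
    obtain ⟨z, hz⟩ := hne x
    refine ⟨z, ?_⟩
    filter_upwards [hlsc x (ball z ε) isOpen_ball ⟨z, hz, mem_ball_self hε⟩] with x' hx'
    obtain ⟨w, hwΦ, hwb⟩ := hx'
    exact ⟨w, hwΦ, le_of_lt (by rw [dist_comm]; exact mem_ball.mp hwb)⟩

theorem lsc_inter_ball (Φ : X → Set E) (hlsc : LscAux Φ) {g : X → E} (hg : Continuous g)
    {ε : ℝ} : LscAux (fun x => Φ x ∩ ball (g x) ε) := by
  rintro x U hU ⟨z, ⟨hzΦ, hzb⟩, hzU⟩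
  rw [mem_ball] at hzb
  obtain ⟨δ1, hδ1, hball⟩ := Metric.isOpen_iff.mp hU z hzU
  set c := (ε - dist z (g x)) / 2 with hc
  have hcpos : 0 < c := by simp only [hc]; linarith
  have h1 : {x' | (Φ x' ∩ ball z (min δ1 c)).Nonempty} ∈ 𝓝 x :=
    hlsc x _ isOpen_ball ⟨z, hzΦ, mem_ball_self (lt_min hδ1 hcpos)⟩
  have h2 : g ⁻¹' ball (g x) c ∈ 𝓝 x :=
    hg.continuousAt.preimage_mem_nhds (ball_mem_nhds _ hcpos)
  filter_upwards [h1, h2] with x' hx1 hx2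
  obtain ⟨w, hwΦ, hwb⟩ := hx1
  refine ⟨w, ⟨hwΦ, ?_⟩, hball (ball_subset_ball (min_le_left _ _) hwb)⟩
  rw [mem_ball] at hwb ⊢
  rw [mem_preimage, mem_ball] at hx2
  calc dist w (g x') ≤ dist w z + dist z (g x) + dist (g x) (g x') := dist_triangle4 _ _ _ _
    _ < c + dist z (g x) + c := by
        have := lt_of_lt_of_le hwb (min_le_right δ1 c)
        rw [dist_comm (g x) (g x')]
        linarith
    _ = ε := by simp only [hc]; ring

theorem michael_selection (Φ : X → Set E) (hlsc : LscAux Φ) (hne : ∀ x, (Φ x).Nonempty)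
    (hcl : ∀ x, IsClosed (Φ x)) (hconv : ∀ x, Convex ℝ (Φ x)) :
    ∃ f : C(X, E), ∀ x, f x ∈ Φ x := by
  have key : ∀ (f : C(X, E)) (n : ℕ), (∀ x, ∃ z ∈ Φ x, dist (f x) z < (1/2 : ℝ) ^ n) →
      ∃ f' : C(X, E), (∀ x, ∃ z ∈ Φ x, dist (f' x) z < (1/2 : ℝ) ^ (n+1)) ∧
        ∀ x, dist (f' x) (f x) ≤ 2 * (1/2 : ℝ) ^ n := by
    intro f n hf
    have hΨne : ∀ x, ((fun x => Φ x ∩ ball (f x) ((1/2 : ℝ) ^ n)) x).Nonempty := by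
      intro x
      obtain ⟨z, hz, hd⟩ := hf x
      exact ⟨z, hz, by rw [mem_ball, dist_comm]; exact hd⟩
    obtain ⟨f', hf'⟩ := approx_selection _ (lsc_inter_ball Φ hlsc f.continuous) hΨne
      (fun x => (hconv x).inter (convex_ball _ _)) (ε := (1/2 : ℝ) ^ (n+1) / 2)
      (by positivity)
    refine ⟨f', fun x => ?_, fun x => ?_⟩
    · obtain ⟨z, ⟨hz, _⟩, hd⟩ := hf' x
      exact ⟨z, hz, lt_of_le_of_lt hd (half_lt_self (by positivity))⟩
    · obtain ⟨z, ⟨_, hzb⟩, hd⟩ := hf' x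
      rw [mem_ball] at hzb
      have h1 : dist (f' x) (f x) ≤ dist (f' x) z + dist z (f x) := dist_triangle _ _ _
      have h2 : (1/2 : ℝ) ^ (n+1) / 2 ≤ (1/2 : ℝ) ^ n := by
        rw [pow_succ]
        nlinarith [pow_pos (by norm_num : (0:ℝ) < 1/2) n]
      nlinarith [pow_pos (by norm_num : (0:ℝ) < 1/2) n]
  choose! step hstep1 hstep2 using key
  obtain ⟨f0, hf0⟩ := approx_selection Φ hlsc hne hconv (ε := (1/2 : ℝ)) (by norm_num)
  have hf0' : ∀ x, ∃ z ∈ Φ x, dist (f0 x) z < (1/2 : ℝ) ^ 0 := by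
    intro x
    obtain ⟨z, hz, hd⟩ := hf0 x
    exact ⟨z, hz, lt_of_le_of_lt hd (by norm_num)⟩
  let F : ∀ n : ℕ, {f : C(X, E) // ∀ x, ∃ z ∈ Φ x, dist (f x) z < (1/2 : ℝ) ^ n} :=
    fun n => Nat.rec ⟨f0, hf0'⟩ (fun n p => ⟨step p.1 n, hstep1 p.1 n p.2⟩) n
  have hFd : ∀ n, dist ((F n).1) ((F (n+1)).1) ≤ 2 * (1/2 : ℝ) ^ n := by
    intro n
    rw [dist_comm]
    refine (ContinuousMap.dist_le (by positivity)).mpr fun x => ?_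
    exact hstep2 (F n).1 n (F n).2 x
  have hcauchy : CauchySeq (fun n => (F n).1) :=
    cauchySeq_of_le_geometric (1/2) 2 (by norm_num) hFd
  obtain ⟨f, hf⟩ := cauchySeq_tendsto_of_complete hcauchy
  refine ⟨f, fun x => ?_⟩
  have hx : Tendsto (fun n => (F n).1 x) atTop (𝓝 (f x)) :=
    ((continuous_eval_const x).tendsto f).comp hf
  choose z hz hdz using fun n => (F n).2 x
  have hzt : Tendsto z atTop (𝓝 (f x)) := by
    rw [tendsto_iff_dist_tendsto_zero]
    have hb : ∀ n, dist (z n) (f x) ≤ (1/2 : ℝ) ^ n + dist ((F n).1 x) (f x) := by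
      intro n
      calc dist (z n) (f x) ≤ dist (z n) ((F n).1 x) + dist ((F n).1 x) (f x) :=
            dist_triangle _ _ _
        _ ≤ (1/2 : ℝ) ^ n + dist ((F n).1 x) (f x) := by
            have := hdz n
            rw [dist_comm]
            linarith
    have hlim : Tendsto (fun n => (1/2 : ℝ) ^ n + dist ((F n).1 x) (f x)) atTop (𝓝 0) := by
      have h1 : Tendsto (fun n => (1/2 : ℝ) ^ n) atTop (𝓝 0) :=
        tendsto_pow_atTop_nhds_zero_of_lt_one (by norm_num) (by norm_num)
      have h2 : Tendsto (fun n => dist ((F n).1 x) (f x)) atTop (𝓝 0) :=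
        tendsto_iff_dist_tendsto_zero.mp hx
      simpa using h1.add h2
    exact squeeze_zero (fun n => dist_nonneg) hb hlim
  exact (hcl x).mem_of_tendsto hzt (Eventually.of_forall hz)

end MichaelAux

/-- A lower semicontinuous moving set with nonempty closed convex values
satisfies the bounded selection-extension property (H₃). -/
theorem selectionExtension_of_convex
    {H : Type*} [NormedAddCommGroup H] [InnerProductSpace ℝ H] [CompleteSpace H]
    (T : ℝ) (hT : 0 < T) (C : ℝ → Set H)
    (hC : ∀ t ∈ Icc (0:ℝ) T, (C t).Nonempty ∧ IsClosed (C t) ∧ Convex ℝ (C t))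
    (hC2 : LscOn C (Icc (0:ℝ) T)) :
    SelectionExtension C T := by
  classical
  intro x hxB hxC η hη
  obtain ⟨M, hM⟩ := hxB
  have hM0 : 0 ≤ M := le_trans (norm_nonneg _) (hM 0 ⟨le_refl _, hT.le⟩)
  set r : ℝ := M + η + 1 with hr
  have hrpos : 0 < r := by positivity
  refine ⟨r, hrpos, ?_⟩
  intro K hK hKsub y hy hyC hyx
  haveI : CompactSpace (Icc (0:ℝ) T) := isCompact_iff_compactSpace.mp isCompact_Icc
  set A : Set ℝ := Icc (0:ℝ) T with hA
  set C' : ℝ → Set H := fun t => closure (C t ∩ ball 0 r) with hC'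
  set D : A → Set H := fun s => if s.1 ∈ K then {y s.1} else C' s.1 with hD
  have hKc : IsClosed K := hK.isClosed
  have hDpos : ∀ s : A, s.1 ∈ K → D s = {y s.1} := by
    intro s h; simp only [hD]; rw [if_pos h]
  have hDneg : ∀ s : A, s.1 ∉ K → D s = C' s.1 := by
    intro s h; simp only [hD]; rw [if_neg h]
  -- lsc of the truncated map on the subtype
  have hlscC' : LscAux (fun s : A => C' s.1) := by
    intro s U hU hne
    obtain ⟨z, hzc, hzU⟩ := hne
    have hz' : ((ball (0:H) r ∩ U) ∩ (C s.1 ∩ ball 0 r)).Nonempty := by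
      obtain ⟨w, hw1, hw2⟩ := mem_closure_iff.mp hzc U hU hzU
      exact ⟨w, ⟨hw2.2, hw1⟩, hw2⟩
    obtain ⟨w, ⟨hwb, hwU⟩, hwC, _⟩ := hz'
    have hnb := hC2 s.1 s.2 (ball 0 r ∩ U) (isOpen_ball.inter hU) ⟨w, hwC, hwb, hwU⟩
    rw [← map_nhds_subtype_val s] at hnb
    rw [mem_map] at hnb
    filter_upwards [hnb] with s' hs'
    obtain ⟨w', hw'C, hw'b, hw'U⟩ := hs'.2
    exact ⟨w', subset_closure ⟨hw'C, hw'b⟩, hw'U⟩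
  have hlscD : LscAux D := by
    intro s U hU hne
    by_cases hsK : s.1 ∈ K
    · have hyU : y s.1 ∈ U := by
        obtain ⟨z, hz1, hz2⟩ := hne
        rw [hDpos s hsK, mem_singleton_iff] at hz1
        exact hz1 ▸ hz2
      have hyball : y s.1 ∈ ball (0:H) r := by
        rw [mem_ball_zero_iff]
        have h0 : ‖y s.1‖ ≤ ‖y s.1 - x s.1‖ + ‖x s.1‖ := by
          have := norm_add_le (y s.1 - x s.1) (x s.1)
          simpa using this
        calc ‖y s.1‖ ≤ ‖y s.1 - x s.1‖ + ‖x s.1‖ := h0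
          _ ≤ η + M := add_le_add (hyx s.1 hsK) (hM s.1 s.2)
          _ < r := by rw [hr]; linarith
      have hyC' : y s.1 ∈ C' s.1 := subset_closure ⟨hyC s.1 hsK, hyball⟩
      have h1 := hlscC' s U hU ⟨y s.1, hyC', hyU⟩
      have h2 : {s' : A | s'.1 ∈ K → y s'.1 ∈ U} ∈ 𝓝 s := by
        have hcy : y ⁻¹' U ∈ 𝓝[K] s.1 := (hy s.1 hsK) (hU.mem_nhds hyU)
        obtain ⟨V, hVopen, hsV, hVsub⟩ := mem_nhdsWithin.mp hcy
        have hV : Subtype.val ⁻¹' V ∈ 𝓝 s :=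
          (hVopen.preimage continuous_subtype_val).mem_nhds hsV
        filter_upwards [hV] with s' hs' hk
        exact hVsub ⟨hs', hk⟩
      filter_upwards [h1, h2] with s' hs1 hs2
      by_cases h : s'.1 ∈ K
      · exact ⟨y s'.1, by rw [hDpos s' h]; exact rfl, hs2 h⟩
      · rw [hDneg s' h]; exact hs1
    · have h1 := hlscC' s U hU (by rwa [hDneg s hsK] at hne)
      have h2 : Subtype.val ⁻¹' Kᶜ ∈ 𝓝 s :=
        (hKc.isOpen_compl.preimage continuous_subtype_val).mem_nhds hsK
      filter_upwards [h1, h2] with s' hs1 hs2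
      rw [hDneg s' hs2]; exact hs1
  -- values of D
  have hDne : ∀ s : A, (D s).Nonempty := by
    intro s
    by_cases h : s.1 ∈ K
    · exact ⟨y s.1, by rw [hDpos s h]; exact rfl⟩
    · refine ⟨x s.1, ?_⟩
      rw [hDneg s h]
      refine subset_closure ⟨hxC s.1 s.2, ?_⟩
      rw [mem_ball_zero_iff]
      calc ‖x s.1‖ ≤ M := hM s.1 s.2
        _ < r := by rw [hr]; linarith
  have hDcl : ∀ s : A, IsClosed (D s) := by
    intro s
    by_cases h : s.1 ∈ K
    · rw [hDpos s h]; exact isClosed_singleton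
    · rw [hDneg s h]; exact isClosed_closure
  have hDconv : ∀ s : A, Convex ℝ (D s) := by
    intro s
    by_cases h : s.1 ∈ K
    · rw [hDpos s h]; exact convex_singleton _
    · rw [hDneg s h]
      exact (((hC s.1 s.2).2.2).inter (convex_ball _ _)).closure
  obtain ⟨f, hf⟩ := michael_selection D hlscD hDne hDcl hDconv
  set ybar : ℝ → H := fun t => f (projIcc 0 T hT.le t) with hybar
  have hval : ∀ t (ht : t ∈ A), ybar t = f ⟨t, ht⟩ := by
    intro t ht
    simp only [hybar, projIcc_of_mem hT.le ht]
  have hDC' : ∀ (s : A), f s ∈ C' s.1 := by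
    intro s
    have := hf s
    by_cases h : s.1 ∈ K
    · rw [hDpos s h, mem_singleton_iff] at this
      rw [this]
      refine subset_closure ⟨hyC s.1 h, ?_⟩
      rw [mem_ball_zero_iff]
      have h0 : ‖y s.1‖ ≤ ‖y s.1 - x s.1‖ + ‖x s.1‖ := by
        have := norm_add_le (y s.1 - x s.1) (x s.1)
        simpa using this
      calc ‖y s.1‖ ≤ ‖y s.1 - x s.1‖ + ‖x s.1‖ := h0
        _ ≤ η + M := add_le_add (hyx s.1 h) (hM s.1 s.2)
        _ < r := by rw [hr]; linarith
    · rw [hDneg s h] at this; exact this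
  refine ⟨ybar, ?_, ?_, ?_, ?_⟩
  · exact (f.continuous.comp continuous_projIcc).continuousOn
  · intro t ht
    rw [hval t ht]
    have := hDC' ⟨t, ht⟩
    have hsub : C' t ⊆ C t := by
      rw [hC']
      calc closure (C t ∩ ball 0 r) ⊆ closure (C t) := closure_mono inter_subset_left
        _ = C t := (hC t ht).2.1.closure_eq
    exact hsub this
  · intro t ht
    have htA : t ∈ A := hKsub ht
    rw [hval t htA]
    have := hf ⟨t, htA⟩
    rwa [hDpos ⟨t, htA⟩ ht, mem_singleton_iff] at this
  · intro t ht
    rw [hval t ht]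
    have := hDC' ⟨t, ht⟩
    have hsub : C' t ⊆ closedBall 0 r := by
      rw [hC']
      calc closure (C t ∩ ball 0 r) ⊆ closure (ball 0 r) := closure_mono inter_subset_right
        _ ⊆ closedBall 0 r := closure_ball_subset_closedBall
    have := hsub this
    rwa [mem_closedBall_zero_iff] at this
end

section
/- Let H be a real Hilbert space and T > 0. Let ψ : [0,T] × H → ℝ be continuous and assume that ψ maps bounded sets into bounded sets. Define C(t) := epi ψ(t,·) = {(u,λ) ∈ H × ℝ : ψ(t,u) ≤ λ} ⊆ H × ℝ. Then C satisfies the bounded selection-extension property (H₃) in H × ℝ: for every bounded map x : [0,T] → H × ℝ with x(t) ∈ C(t) for all t and every η > 0, there exists R > 0 such that for every compact K ⊆ [0,T] and every continuous y : K → H × ℝ with y(t) ∈ C(t) for all t ∈ K and sup_{t∈K}‖y(t) − x(t)‖ ≤ η, there is a continuous ȳ : [0,T] → H × ℝ with ȳ(t) ∈ C(t) for all t ∈ [0,T], ȳ = y on K, and sup_{t∈[0,T]}‖ȳ(t)‖ ≤ R. -/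
open MeasureTheory Set Metric Filter Topology
open scoped RealInnerProductSpace ENNReal

/-!
Extend `y` from the compact set `K` to all of `ℝ` by affine interpolation across the gaps of `K`.
The extension is continuous, and it stays in the closed ball of radius `|M| + η` containing
`y(K)` because balls are convex. Then lift it vertically, `(u, μ) ↦ (u, max μ (ψ t u))`: this
lands in the epigraph, fixes the points already in it, and keeps the extension bounded since `ψ`
is bounded on bounded sets.
-/

open AffineMap

section InterpolateGaps

variable {E : Type*} [NormedAddCommGroup E] [NormedSpace ℝ E]

/-- Meaningful only on `[sInf K, sSup K]`: beyond it one of the two sets is empty and its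
`sSup`/`sInf` is the junk value `0`. -/
noncomputable def interpolateGaps (K : Set ℝ) (y : ℝ → E) (t : ℝ) : E :=
  lineMap (y (sSup (K ∩ Iic t))) (y (sInf (K ∩ Ici t)))
    ((t - sSup (K ∩ Iic t)) / (sInf (K ∩ Ici t) - sSup (K ∩ Iic t)))

variable {K : Set ℝ} {y : ℝ → E} {t α β : ℝ}

theorem interpolateGaps_eq_lineMap (hα : IsGreatest (K ∩ Iic t) α)
    (hβ : IsLeast (K ∩ Ici t) β) :
    interpolateGaps K y t = lineMap (y α) (y β) ((t - α) / (β - α)) := by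
  rw [interpolateGaps, hα.csSup_eq, hβ.csInf_eq]

theorem interpolateGaps_eq_of_mem (ht : t ∈ K) : interpolateGaps K y t = y t := by
  rw [interpolateGaps_eq_lineMap (β := t) ⟨⟨ht, mem_Iic.2 le_rfl⟩, fun _ h => h.2⟩
    ⟨⟨ht, mem_Ici.2 le_rfl⟩, fun _ h => h.2⟩, lineMap_same_apply]

theorem interpolateGaps_neg (K : Set ℝ) (y : ℝ → E) (t : ℝ) :
    interpolateGaps (-K) (y ∘ Neg.neg) (-t) = interpolateGaps K y t := by
  have hIic : -K ∩ Iic (-t) = -(K ∩ Ici t) := by ext; simp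
  have hIci : -K ∩ Ici (-t) = -(K ∩ Iic t) := by ext; simp
  simp only [interpolateGaps, hIic, hIci, Real.sSup_neg, Real.sInf_neg, Function.comp_apply,
    neg_neg]
  set p := sSup (K ∩ Iic t)
  set q := sInf (K ∩ Ici t)
  rcases eq_or_ne q p with hqp | hqp
  · simp [hqp]
  · rw [← lineMap_apply_one_sub]
    congr 1
    rw [neg_sub_neg, neg_sub_neg, eq_div_iff (sub_ne_zero.2 hqp), sub_mul,
      div_mul_cancel₀ _ (sub_ne_zero.2 hqp)]
    ring

theorem interpolateGaps_eqOn_gap (hα : α ∈ K) (hβ : β ∈ K)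
    (hgap : ∀ k ∈ K, k ≤ α ∨ β ≤ k) :
    EqOn (interpolateGaps K y) (fun t => lineMap (y α) (y β) ((t - α) / (β - α)))
      (Ioo α β) := by
  intro t ht
  refine interpolateGaps_eq_lineMap ⟨⟨hα, ht.1.le⟩, fun k hk => ?_⟩
    ⟨⟨hβ, ht.2.le⟩, fun k hk => ?_⟩
  · exact (hgap k hk.1).resolve_right fun h => (ht.2.trans_le h).not_ge hk.2
  · exact (hgap k hk.1).resolve_left fun h => (h.trans_lt ht.1).not_ge hk.2

theorem interpolateGaps_mem (hK : IsCompact K) {s : Set E} (hs : Convex ℝ s) {u v : ℝ}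
    (hu : u ∈ K ∩ Iic t) (hv : v ∈ K ∩ Ici t) (hys : ∀ k ∈ K ∩ Icc u v, y k ∈ s) :
    interpolateGaps K y t ∈ s := by
  obtain ⟨⟨hpK, hpt⟩, hpmax⟩ := (hK.inter_right isClosed_Iic).isGreatest_sSup ⟨u, hu⟩
  obtain ⟨⟨hqK, htq⟩, hqmin⟩ := (hK.inter_right isClosed_Ici).isLeast_sInf ⟨v, hv⟩
  rw [interpolateGaps]
  refine hs.lineMap_mem (hys _ ⟨hpK, hpmax hu, hpt.trans hv.2⟩)
    (hys _ ⟨hqK, hu.2.trans htq, hqmin hv⟩) ⟨?_, ?_⟩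
  · exact div_nonneg (sub_nonneg.2 hpt) (sub_nonneg.2 (hpt.trans htq))
  · exact div_le_one_of_le₀ (sub_le_sub_right htq _) (sub_nonneg.2 (hpt.trans htq))

theorem continuousAt_interpolateGaps_of_notMem (hK : IsCompact K) (ht : t ∉ K)
    (hlo : (K ∩ Iic t).Nonempty) (hhi : (K ∩ Ici t).Nonempty) :
    ContinuousAt (interpolateGaps K y) t := by
  set α := sSup (K ∩ Iic t)
  set β := sInf (K ∩ Ici t)
  obtain ⟨⟨hαK, hαt⟩, hαmax⟩ : IsGreatest (K ∩ Iic t) α :=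
    (hK.inter_right isClosed_Iic).isGreatest_sSup hlo
  obtain ⟨⟨hβK, htβ⟩, hβmin⟩ : IsLeast (K ∩ Ici t) β :=
    (hK.inter_right isClosed_Ici).isLeast_sInf hhi
  have hα : α < t := hαt.lt_of_ne fun h => ht (h ▸ hαK)
  have hβ : t < β := htβ.lt_of_ne fun h => ht (h ▸ hβK)
  have hgap : ∀ k ∈ K, k ≤ α ∨ β ≤ k := fun k hk =>
    (le_total k t).imp (fun h => hαmax ⟨hk, h⟩) (fun h => hβmin ⟨hk, h⟩)
  have hline : Continuous fun s => lineMap (y α) (y β) ((s - α) / (β - α)) :=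
    lineMap_continuous.comp ((continuous_id.sub continuous_const).div_const _)
  exact hline.continuousAt.congr
    ((interpolateGaps_eqOn_gap hαK hβK hgap).eventuallyEq_of_mem (Ioo_mem_nhds hα hβ)).symm

theorem continuousWithinAt_Ici_interpolateGaps (hK : IsCompact K) (hy : ContinuousOn y K)
    (ht : t ∈ K) (hlt : ∃ k ∈ K, t < k) :
    ContinuousWithinAt (interpolateGaps K y) (Ici t) t := by
  obtain ⟨k, hkK, htk⟩ := hlt
  have hS : (K ∩ Ioi t).Nonempty := ⟨k, hkK, htk⟩
  have hbdd : BddBelow (K ∩ Ioi t) := ⟨t, fun _ h => h.2.le⟩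
  set σ := sInf (K ∩ Ioi t)
  rcases (le_csInf hS fun _ h => h.2.le : t ≤ σ).eq_or_lt with hσ | hσ
  · -- `K` accumulates at `t` from the right: squeeze between values of `y` near `t`
    rw [ContinuousWithinAt, interpolateGaps_eq_of_mem ht, Metric.tendsto_nhds]
    intro ε hε
    obtain ⟨δ, hδ, hyδ⟩ := Metric.continuousWithinAt_iff.1 (hy t ht) ε hε
    obtain ⟨k, ⟨hkK, htk⟩, hkδ⟩ :=
      exists_lt_of_csInf_lt hS (hσ ▸ lt_add_of_pos_right t hδ)
    filter_upwards [Ico_mem_nhdsGE htk] with s hs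
    refine interpolateGaps_mem hK (convex_ball (y t) ε) ⟨ht, hs.1⟩ ⟨hkK, hs.2.le⟩
      fun k' hk' => ?_
    exact hyδ hk'.1 (by rw [Real.dist_eq, abs_lt]; constructor <;> linarith [hk'.2.1, hk'.2.2])
  · have hσK : σ ∈ K :=
      hK.isClosed.closure_subset (closure_mono inter_subset_left (csInf_mem_closure hS hbdd))
    have hgap : ∀ k ∈ K, k ≤ t ∨ σ ≤ k := fun k hk =>
      (le_or_gt k t).imp_right fun hkt => csInf_le hbdd ⟨hk, hkt⟩
    have hline : Continuous fun s => lineMap (y t) (y σ) ((s - t) / (σ - t)) :=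
      lineMap_continuous.comp ((continuous_id.sub continuous_const).div_const _)
    rw [← continuousWithinAt_Ioi_iff_Ici]
    refine hline.continuousWithinAt.congr_of_eventuallyEq
      (eventually_of_mem (Ioo_mem_nhdsGT hσ) (interpolateGaps_eqOn_gap ht hσK hgap)) ?_
    simp [interpolateGaps_eq_of_mem ht]

theorem continuousWithinAt_Iic_interpolateGaps (hK : IsCompact K) (hy : ContinuousOn y K)
    (ht : t ∈ K) (hlt : ∃ k ∈ K, k < t) :
    ContinuousWithinAt (interpolateGaps K y) (Iic t) t := by
  obtain ⟨k, hkK, hkt⟩ := hlt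
  have hneg := continuousWithinAt_Ici_interpolateGaps hK.neg
    (hy.comp continuousOn_neg fun _ h => mem_neg.1 h) (neg_mem_neg.2 ht)
    ⟨-k, neg_mem_neg.2 hkK, neg_lt_neg hkt⟩
  have hcomp := hneg.comp continuousWithinAt_neg fun _ hs => neg_le_neg (mem_Iic.1 hs)
  convert hcomp using 1
  ext s
  exact (interpolateGaps_neg K y s).symm

theorem continuousOn_interpolateGaps (hK : IsCompact K) (hy : ContinuousOn y K) {a b : ℝ}
    (ha : a ∈ K) (hb : b ∈ K) : ContinuousOn (interpolateGaps K y) (Icc a b) := by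
  intro t ht
  by_cases htK : t ∈ K
  · rw [← Icc_union_Icc_eq_Icc ht.1 ht.2]
    refine ContinuousWithinAt.union ?_ ?_
    · rcases ht.1.eq_or_lt with rfl | hat
      · simp
      · exact (continuousWithinAt_Iic_interpolateGaps hK hy htK ⟨a, ha, hat⟩).mono
          Icc_subset_Iic_self
    · rcases ht.2.eq_or_lt with rfl | htb
      · simp
      · exact (continuousWithinAt_Ici_interpolateGaps hK hy htK ⟨b, hb, htb⟩).mono
          Icc_subset_Ici_self
  · exact (continuousAt_interpolateGaps_of_notMem hK htK ⟨a, ha, ht.1⟩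
      ⟨b, hb, ht.2⟩).continuousWithinAt

theorem exists_continuous_extension_of_isCompact (hK : IsCompact K) (hy : ContinuousOn y K)
    {s : Set E} (hs : Convex ℝ s) (hsne : s.Nonempty) (hys : MapsTo y K s) :
    ∃ g : ℝ → E, Continuous g ∧ EqOn g y K ∧ ∀ t, g t ∈ s := by
  rcases K.eq_empty_or_nonempty with rfl | hne
  · obtain ⟨z, hz⟩ := hsne
    exact ⟨fun _ => z, continuous_const, eqOn_empty _ _, fun _ => hz⟩
  have hab : sInf K ≤ sSup K := csInf_le hK.bddBelow (hK.sSup_mem hne)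
  refine ⟨fun t => interpolateGaps K y (projIcc _ _ hab t), ?_, fun t ht => ?_, fun t => ?_⟩
  · exact (continuousOn_interpolateGaps hK hy (hK.sInf_mem hne) (hK.sSup_mem hne)).comp_continuous
      (continuous_subtype_val.comp continuous_projIcc) fun t => (projIcc _ _ hab t).2
  · simp [projIcc_of_mem hab ⟨csInf_le hK.bddBelow ht, le_csSup hK.bddAbove ht⟩,
      interpolateGaps_eq_of_mem ht]
  · obtain ⟨ht₁, ht₂⟩ := (projIcc _ _ hab t).2
    exact interpolateGaps_mem hK hs ⟨hK.sInf_mem hne, ht₁⟩ ⟨hK.sSup_mem hne, ht₂⟩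
      fun k hk => hys hk.1

end InterpolateGaps

theorem WithLp.norm_toLp_prod_le_add {p : ℝ≥0∞} [Fact (1 ≤ p)] {α β : Type*}
    [SeminormedAddCommGroup α] [SeminormedAddCommGroup β] (u : α) (v : β) :
    ‖WithLp.toLp p (u, v)‖ ≤ ‖u‖ + ‖v‖ := by
  have hsplit : WithLp.toLp p (u, v) = WithLp.toLp p (u, 0) + WithLp.toLp p (0, v) := by
    simp [← WithLp.toLp_add]
  rw [hsplit, ← WithLp.norm_toLp_fst p α β u, ← WithLp.norm_toLp_snd p α β v]
  exact norm_add_le _ _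

theorem selectionExtension_of_epigraph_general
    {H : Type*} [NormedAddCommGroup H] [InnerProductSpace ℝ H]
    (T : ℝ) (ψ : ℝ → H → ℝ)
    (hψcont : ContinuousOn (fun q : ℝ × H => ψ q.1 q.2) (Icc (0:ℝ) T ×ˢ (univ : Set H)))
    (hψbd : ∀ M : ℝ, ∃ M' : ℝ, ∀ t ∈ Icc (0:ℝ) T, ∀ u : H, ‖u‖ ≤ M → |ψ t u| ≤ M') :
    SelectionExtension
      (fun t => {p : WithLp 2 (H × ℝ) |
        ψ t (WithLp.equiv 2 (H × ℝ) p).1 ≤ (WithLp.equiv 2 (H × ℝ) p).2}) T := by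
  rintro x ⟨M, hM⟩ - η hη
  set c := |M| + η
  have hc : 0 < c := by positivity
  obtain ⟨M', hM'⟩ := hψbd c
  refine ⟨c + max c M', add_pos_of_pos_of_nonneg hc (hc.le.trans (le_max_left _ _)),
    fun K hK hKT y hy hyC hyx => ?_⟩
  have hyc : MapsTo y K (closedBall 0 c) := fun t ht => by
    rw [mem_closedBall_zero_iff]
    calc ‖y t‖ ≤ ‖y t - x t‖ + ‖x t‖ := norm_le_norm_sub_add _ _
      _ ≤ η + |M| := add_le_add (hyx t ht) ((hM t (hKT ht)).trans (le_abs_self M))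
      _ = c := add_comm _ _
  obtain ⟨g, hg, hgy, hgc⟩ := exists_continuous_extension_of_isCompact hK hy
    (convex_closedBall 0 c) (nonempty_closedBall.2 hc.le) hyc
  simp only [mem_closedBall_zero_iff] at hgc
  have hψg : ContinuousOn (fun t => ψ t (g t).fst) (Icc 0 T) :=
    hψcont.comp (continuous_id.prodMk ((WithLp.continuous_fst _ _ _).comp hg)).continuousOn
      fun t ht => ⟨ht, mem_univ _⟩
  refine ⟨fun t => WithLp.toLp 2 ((g t).fst, max (g t).snd (ψ t (g t).fst)), ?_, ?_, ?_, ?_⟩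
  · exact (WithLp.prod_continuous_toLp 2 H ℝ).comp_continuousOn
      (((WithLp.continuous_fst _ _ _).comp hg).continuousOn.prodMk
        (((WithLp.continuous_snd _ _ _).comp hg).continuousOn.sup hψg))
  · exact fun t _ => le_max_right (g t).snd _
  · intro t ht
    dsimp only
    rw [hgy ht, max_eq_left (hyC t ht)]
    rfl
  · intro t ht
    have hu : ‖(g t).fst‖ ≤ c := (WithLp.norm_fst_le _ _).trans (hgc t)
    have hμ : ‖(g t).snd‖ ≤ c := (WithLp.norm_snd_le _ _).trans (hgc t)
    rw [Real.norm_eq_abs] at hμ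
    calc _ ≤ ‖(g t).fst‖ + ‖max (g t).snd (ψ t (g t).fst)‖ :=
          WithLp.norm_toLp_prod_le_add _ _
      _ ≤ c + max c M' := by
        rw [Real.norm_eq_abs]
        exact add_le_add hu (abs_max_le_max_abs_abs.trans (max_le_max hμ (hM' t ht _ hu)))

/-- For a continuous `ψ : [0,T] × H → ℝ` mapping bounded sets into bounded
sets, the epigraph family `C t = epi ψ(t,·) ⊆ H × ℝ` (with the product Hilbert structure,
i.e. the `ℓ²` product `WithLp 2 (H × ℝ)`) satisfies the bounded selection-extension
property (H₃). -/
theorem selectionExtension_of_epigraph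
    {H : Type*} [NormedAddCommGroup H] [InnerProductSpace ℝ H] [CompleteSpace H]
    (T : ℝ) (hT : 0 < T) (ψ : ℝ → H → ℝ)
    (hψcont : ContinuousOn (fun q : ℝ × H => ψ q.1 q.2) (Icc (0:ℝ) T ×ˢ (univ : Set H)))
    (hψbd : ∀ M : ℝ, ∃ M' : ℝ, ∀ t ∈ Icc (0:ℝ) T, ∀ u : H, ‖u‖ ≤ M → |ψ t u| ≤ M') :
    SelectionExtension
      (fun t => {p : WithLp 2 (H × ℝ) |
        ψ t (WithLp.equiv 2 (H × ℝ) p).1 ≤ (WithLp.equiv 2 (H × ℝ) p).2}) T :=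
  selectionExtension_of_epigraph_general T ψ hψcont hψbd
end

section
/- Let H be a real Hilbert space, T > 0, ρ ∈ (0,∞], and let C : [0,T] ⇉ H satisfy: (H₁) for all t ∈ [0,T], C(t) is nonempty, closed, connected, and ρ-uniformly prox-regular; (H₂) C is lower semicontinuous on [0,T]. Let ν be a complete positive Radon measure on [0,T], let x : [0,T] → H be of bounded variation whose differential measure dx is absolutely continuous with respect to ν with density v ∈ L¹_ν([0,T];H) (i.e., x(t) = x(0) + ∫_{(0,t]} v dν for all t). Define f_x(t,y) := δ_{C(t)}(y) + ⟨v(t), y − x(t)⟩ + (‖v(t)‖/(2ρ))‖y − x(t)‖² (with values in ℝ ∪ {+∞}, where δ_{C(t)} is the indicator function) and m_{f_x}(t) := inf_{y ∈ H} f_x(t,y). Then for every continuous y : [0,T] → H, the function t ↦ f_x(t, y(t)) is ν-measurable, and the function t ↦ m_{f_x}(t) is ν-measurable. -/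
open MeasureTheory Set Metric Filter Topology
open scoped RealInnerProductSpace ENNReal

section AuxMeasurability

variable {H : Type*} [NormedAddCommGroup H] [InnerProductSpace ℝ H]

/-- From lower semicontinuity of `C` and continuity of `G`, the "slab"
`{p | p.1 ∈ [0,T] ∧ ∃ z ∈ C p.1, G (p.2.1, p.2.2, z) < r}` is the trace on the slab
of an open subset of `ℝ × H × H`. -/
lemma lscOn_exists_isOpen (T : ℝ) (C : ℝ → Set H) (hC2 : LscOn C (Icc (0:ℝ) T))
    (G : H × H × H → ℝ) (hG : Continuous G) (r : ℝ) :
    ∃ O : Set (ℝ × H × H), IsOpen O ∧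
      ∀ p : ℝ × H × H, p.1 ∈ Icc (0:ℝ) T →
        (p ∈ O ↔ ∃ z ∈ C p.1, G (p.2.1, p.2.2, z) < r) := by
  classical
  set W : Set (ℝ × H × H) :=
    {p | p.1 ∈ Icc (0:ℝ) T ∧ ∃ z ∈ C p.1, G (p.2.1, p.2.2, z) < r} with hW
  have key : ∀ q ∈ W, ∃ Oq : Set (ℝ × H × H), IsOpen Oq ∧ q ∈ Oq ∧
      ∀ p ∈ Oq, p.1 ∈ Icc (0:ℝ) T → ∃ z ∈ C p.1, G (p.2.1, p.2.2, z) < r := by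
    rintro ⟨t₀, a₀, w₀⟩ ⟨ht₀, z₀, hz₀C, hz₀G⟩
    have hopen : IsOpen (G ⁻¹' Iio r) := isOpen_Iio.preimage hG
    obtain ⟨ε, hε, hball⟩ := Metric.isOpen_iff.1 hopen (a₀, w₀, z₀) hz₀G
    have hmemU : (C t₀ ∩ ball z₀ ε).Nonempty := ⟨z₀, hz₀C, mem_ball_self hε⟩
    have hnhd := hC2 t₀ ht₀ (ball z₀ ε) isOpen_ball hmemU
    rw [mem_nhdsWithin] at hnhd
    obtain ⟨V, hVopen, hVmem, hVsub⟩ := hnhd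
    refine ⟨V ×ˢ (ball a₀ ε ×ˢ ball w₀ ε),
      hVopen.prod (isOpen_ball.prod isOpen_ball),
      ⟨hVmem, mem_ball_self hε, mem_ball_self hε⟩, ?_⟩
    rintro ⟨t, a, w⟩ ⟨htV, haB, hwB⟩ htIcc
    obtain ⟨-, z, hzC, hzU⟩ := hVsub ⟨htV, htIcc⟩
    refine ⟨z, hzC, ?_⟩
    have hmem : ((a, w, z) : H × H × H) ∈ ball (a₀, w₀, z₀) ε := by
      rw [← ball_prod_same, ← ball_prod_same]
      exact ⟨haB, hwB, hzU⟩
    exact hball hmem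
  choose! Oq hOopen hOmem hOsub using key
  refine ⟨⋃ q ∈ W, Oq q, isOpen_biUnion fun q hq => hOopen q hq, ?_⟩
  intro p hp
  constructor
  · intro hpO
    obtain ⟨q, hq, hpq⟩ := mem_iUnion₂.1 hpO
    exact hOsub q hq p hpq hp
  · intro hex
    exact mem_iUnion₂.2 ⟨p, ⟨hp, hex⟩, hOmem p ⟨hp, hex⟩⟩

/-- Measurability of the slab sets along strongly measurable parameter maps. -/
lemma measurableSet_slab (T : ℝ) (C : ℝ → Set H) (hC2 : LscOn C (Icc (0:ℝ) T))
    (G : H × H × H → ℝ) (hG : Continuous G) (r : ℝ)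
    (a w : ℝ → H) (ha : MeasureTheory.StronglyMeasurable a)
    (hw : MeasureTheory.StronglyMeasurable w) :
    MeasurableSet {t : ℝ | t ∈ Icc (0:ℝ) T ∧ ∃ z ∈ C t, G (a t, w t, z) < r} := by
  obtain ⟨O, hOopen, hOspec⟩ := lscOn_exists_isOpen T C hC2 G hG r
  letI : MeasurableSpace (ℝ × H × H) := borel _
  haveI : BorelSpace (ℝ × H × H) := ⟨rfl⟩
  have hΦ : MeasureTheory.StronglyMeasurable fun t : ℝ => ((t, a t, w t) : ℝ × H × H) :=
    stronglyMeasurable_id.prodMk (ha.prodMk hw)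
  have hΦm : Measurable fun t : ℝ => ((t, a t, w t) : ℝ × H × H) := hΦ.measurable
  have hset : {t : ℝ | t ∈ Icc (0:ℝ) T ∧ ∃ z ∈ C t, G (a t, w t, z) < r}
      = Icc (0:ℝ) T ∩ (fun t : ℝ => ((t, a t, w t) : ℝ × H × H)) ⁻¹' O := by
    ext t
    constructor
    · rintro ⟨ht, hex⟩
      exact ⟨ht, (hOspec (t, a t, w t) ht).2 hex⟩
    · rintro ⟨ht, hO⟩
      exact ⟨ht, (hOspec (t, a t, w t) ht).1 hO⟩
  rw [hset]
  exact measurableSet_Icc.inter (hΦm hOopen.measurableSet)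

/-- The primitive `t ↦ ∫_{(0,t]} v dν` of an integrable function is strongly measurable. -/
lemma stronglyMeasurable_primitive (ν : Measure ℝ) {v : ℝ → H} (hv : Integrable v ν) :
    MeasureTheory.StronglyMeasurable fun t : ℝ => ∫ s in Ioc (0:ℝ) t, v s ∂ν := by
  letI : MeasurableSpace H := borel H
  haveI : BorelSpace H := ⟨rfl⟩
  set F : ℝ → H := fun t => ∫ s in Ioc (0:ℝ) t, v s ∂ν with hF
  set ψ : ℕ → ℝ → ℝ := fun n t => (⌈((n : ℝ) + 1) * t⌉ : ℝ) / ((n : ℝ) + 1) with hψ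
  have hn1 : ∀ n : ℕ, (0:ℝ) < (n : ℝ) + 1 := fun n => by positivity
  have hψ_ge : ∀ n t, t ≤ ψ n t := by
    intro n t
    rw [hψ]
    rw [le_div_iff₀ (hn1 n)]
    calc t * ((n : ℝ) + 1) = ((n : ℝ) + 1) * t := mul_comm _ _
    _ ≤ (⌈((n : ℝ) + 1) * t⌉ : ℝ) := Int.le_ceil _
  have hψ_le : ∀ n t, ψ n t ≤ t + 1 / ((n : ℝ) + 1) := by
    intro n t
    rw [hψ]
    rw [div_le_iff₀ (hn1 n)]
    have h1 := (Int.ceil_lt_add_one (((n : ℝ) + 1) * t)).le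
    calc (⌈((n : ℝ) + 1) * t⌉ : ℝ) ≤ ((n : ℝ) + 1) * t + 1 := h1
    _ = (t + 1 / ((n : ℝ) + 1)) * ((n : ℝ) + 1) := by field_simp
  have hFn : ∀ n : ℕ, MeasureTheory.StronglyMeasurable fun t => F (ψ n t) := by
    intro n
    have h1 : (fun t => F (ψ n t))
        = (fun k : ℤ => F ((k : ℝ) / ((n : ℝ) + 1))) ∘ fun t : ℝ => ⌈((n : ℝ) + 1) * t⌉ := rfl
    rw [h1, stronglyMeasurable_iff_measurable_separable]
    refine ⟨measurable_from_top.comp (Int.measurable_ceil.comp (measurable_id.const_mul _)), ?_⟩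
    exact ((countable_range _).isSeparable).mono (range_comp_subset_range _ _)
  have hlim : ∀ t, Tendsto (fun n => F (ψ n t)) atTop (𝓝 (F t)) := by
    intro t
    have hrw : ∀ r : ℝ, F r = ∫ s, (Ioc (0:ℝ) r).indicator v s ∂ν := fun r =>
      (integral_indicator measurableSet_Ioc).symm
    simp only [hrw]
    apply tendsto_integral_of_dominated_convergence (fun s => ‖v s‖)
    · intro n
      exact hv.aestronglyMeasurable.indicator measurableSet_Ioc
    · exact hv.norm
    · intro n
      exact Eventually.of_forall fun s =>
        norm_indicator_le_norm_self (s := Ioc (0:ℝ) (ψ n t)) v s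
    · refine Eventually.of_forall fun s => ?_
      by_cases hs : s ∈ Ioc (0:ℝ) t
      · have hmem : ∀ n : ℕ, (Ioc (0:ℝ) (ψ n t)).indicator v s = v s := fun n =>
          indicator_of_mem (show s ∈ Ioc (0:ℝ) (ψ n t) from ⟨hs.1, hs.2.trans (hψ_ge n t)⟩) v
        rw [indicator_of_mem hs]
        simp only [hmem]
        exact tendsto_const_nhds
      · rw [indicator_of_notMem hs]
        rcases lt_or_ge (0:ℝ) s with h0 | h0
        · have hts : t < s := by
            by_contra hcon
            push_neg at hcon
            exact hs ⟨h0, hcon⟩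
          have htend : Tendsto (fun n : ℕ => t + 1 / ((n : ℝ) + 1)) atTop (𝓝 t) := by
            have h2 : Tendsto (fun n : ℕ => t + 1 / ((n : ℝ) + 1)) atTop (𝓝 (t + 0)) :=
              Tendsto.add tendsto_const_nhds tendsto_one_div_add_atTop_nhds_zero_nat
            rwa [add_zero] at h2
          have hev2 : ∀ᶠ n : ℕ in atTop, t + 1 / ((n : ℝ) + 1) < s :=
            htend.eventually_lt_const hts
          have hev : ∀ᶠ n in atTop, (Ioc (0:ℝ) (ψ n t)).indicator v s = 0 := by
            filter_upwards [hev2] with n hn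
            refine indicator_of_notMem (fun hmem => ?_) v
            exact absurd ((hmem.2.trans (hψ_le n t)).trans_lt hn) (lt_irrefl s)
          exact tendsto_const_nhds.congr' (hev.mono fun n hn => hn.symm)
        · have hall : ∀ n : ℕ, (Ioc (0:ℝ) (ψ n t)).indicator v s = 0 := fun n =>
            indicator_of_notMem (fun hmem => absurd hmem.1 (not_lt.2 h0)) v
          simp only [hall]
          exact tendsto_const_nhds
  exact stronglyMeasurable_of_tendsto atTop hFn (tendsto_pi_nhds.2 hlim)

end AuxMeasurability

open Classical in
/-- Under (H₁)-(H₂), for a BV trajectory `x` whose differential measure has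
density `v` w.r.t. a Radon measure `ν` on `[0,T]`, the function
`t ↦ f_x(t, y t)` is `ν`-measurable (w.r.t. the completion, i.e. null-measurable) for every
continuous `y`, and so is `t ↦ m_{f_x}(t) = inf_{z ∈ H} f_x(t,z)`, where
`f_x(t,z) = δ_{C(t)}(z) + ⟪v t, z - x t⟫ + (‖v t‖/(2ρ))‖z - x t‖²` with values in `ℝ ∪ {+∞}`. -/
theorem fx_and_mfx_nullMeasurable
    {H : Type*} [NormedAddCommGroup H] [InnerProductSpace ℝ H] [CompleteSpace H]
    (T : ℝ) (hT : 0 < T) (ρ : ℝ≥0∞) (hρ : 0 < ρ) (C : ℝ → Set H)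
    (hC1 : HypH1 ρ C T) (hC2 : LscOn C (Icc (0:ℝ) T))
    (ν : Measure ℝ) (hν : IsRadonOn ν T)
    (x v : ℝ → H) (hBV : BoundedVariationOn x (Icc (0:ℝ) T))
    (hdens : HasDensity T ν x v) :
    (∀ y : ℝ → H, ContinuousOn y (Icc (0:ℝ) T) →
      NullMeasurable (fun t =>
        (if y t ∈ C t then
          ((⟪v t, y t - x t⟫ + ‖v t‖ / (2 * ρ.toReal) * ‖y t - x t‖ ^ 2 : ℝ) : EReal)
        else (⊤ : EReal))) ν) ∧
    NullMeasurable (fun t => ⨅ z : H,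
        (if z ∈ C t then
          ((⟪v t, z - x t⟫ + ‖v t‖ / (2 * ρ.toReal) * ‖z - x t‖ ^ 2 : ℝ) : EReal)
        else (⊤ : EReal))) ν := by
  classical
  obtain ⟨hνfin, hνreg, hνnull⟩ := hν
  obtain ⟨hvInt, hxrep⟩ := hdens
  have hae_Icc : ∀ᵐ t ∂ν, t ∈ Icc (0:ℝ) T := by
    rw [MeasureTheory.ae_iff]
    exact measure_mono_null (fun a ha => ha) hνnull
  set v' : ℝ → H := hvInt.aestronglyMeasurable.mk v with hv'def
  have hv'sm : MeasureTheory.StronglyMeasurable v' :=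
    hvInt.aestronglyMeasurable.stronglyMeasurable_mk
  have hvv' : ∀ᵐ t ∂ν, v t = v' t := hvInt.aestronglyMeasurable.ae_eq_mk
  have hFsm := stronglyMeasurable_primitive ν hvInt
  set x' : ℝ → H := fun t => x 0 + ∫ s in Ioc (0:ℝ) t, v s ∂ν with hx'def
  have hx'sm : MeasureTheory.StronglyMeasurable x' := stronglyMeasurable_const.add hFsm
  have hxx' : ∀ t ∈ Icc (0:ℝ) T, x t = x' t := by
    intro t ht
    rw [hx'def]
    exact hxrep t ht
  set G : H × H × H → ℝ :=
    fun p => ⟪p.1, p.2.2 - p.2.1⟫ + ‖p.1‖ / (2 * ρ.toReal) * ‖p.2.2 - p.2.1‖ ^ 2 with hGdef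
  have hGc : Continuous G := by
    apply Continuous.add
    · exact continuous_inner.comp
        (continuous_fst.prodMk (continuous_snd.snd.sub continuous_snd.fst))
    · exact ((continuous_fst.norm).div_const _).mul
        ((continuous_snd.snd.sub continuous_snd.fst).norm.pow 2)
  constructor
  · -- part 1
    intro y hy
    set proj : ℝ → ℝ := fun t => max 0 (min t T) with hproj
    have hprojc : Continuous proj := continuous_const.max (continuous_id.min continuous_const)
    have hmaps : ∀ t, proj t ∈ Icc (0:ℝ) T := fun t =>
      ⟨le_max_left _ _, max_le hT.le (min_le_right _ _)⟩
    have hprojeq : ∀ t ∈ Icc (0:ℝ) T, proj t = t := by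
      intro t ht
      rw [hproj]
      simp only
      rw [min_eq_left ht.2, max_eq_right ht.1]
    set yc : ℝ → H := fun t => y (proj t) with hyc
    have hycc : Continuous yc := hy.comp_continuous hprojc hmaps
    have hyceq : ∀ t ∈ Icc (0:ℝ) T, yc t = y t := by
      intro t ht
      rw [hyc]
      simp only
      rw [hprojeq t ht]
    have hycsm : MeasureTheory.StronglyMeasurable yc := hycc.stronglyMeasurable
    have hGd : Continuous (fun p : H × H × H => ‖p.2.2 - p.2.1‖) :=
      (continuous_snd.snd.sub continuous_snd.fst).norm
    have hA : ∀ n : ℕ, MeasurableSet {t : ℝ | t ∈ Icc (0:ℝ) T ∧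
        ∃ z ∈ C t, ‖z - yc t‖ < 1 / ((n : ℝ) + 1)} := fun n =>
      measurableSet_slab T C hC2 _ hGd _ v' yc hv'sm hycsm
    set Sm : Set ℝ := ⋂ n : ℕ, {t : ℝ | t ∈ Icc (0:ℝ) T ∧
        ∃ z ∈ C t, ‖z - yc t‖ < 1 / ((n : ℝ) + 1)} with hSm
    have hSmeas : MeasurableSet Sm := MeasurableSet.iInter hA
    have hSiff : ∀ t ∈ Icc (0:ℝ) T, (y t ∈ C t ↔ t ∈ Sm) := by
      intro t ht
      constructor
      · intro hyC
        refine mem_iInter.2 fun n => ⟨ht, y t, hyC, ?_⟩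
        rw [hyceq t ht, sub_self, norm_zero]
        positivity
      · intro hSmt
        have hclosed := (hC1 t ht).2.1
        have hclos : y t ∈ closure (C t) := by
          rw [Metric.mem_closure_iff]
          intro ε hε
          obtain ⟨n, hn⟩ := exists_nat_one_div_lt hε
          obtain ⟨-, z, hzC, hzlt⟩ := mem_iInter.1 hSmt n
          refine ⟨z, hzC, ?_⟩
          rw [dist_eq_norm]
          calc ‖y t - z‖ = ‖z - yc t‖ := by rw [hyceq t ht, norm_sub_rev]
          _ < 1 / ((n : ℝ) + 1) := hzlt
          _ < ε := hn
        rwa [hclosed.closure_eq] at hclos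
    set g0 : ℝ → ℝ := fun t => G (v' t, x' t, yc t) with hg0
    have hg0sm : MeasureTheory.StronglyMeasurable g0 :=
      hGc.comp_stronglyMeasurable (hv'sm.prodMk (hx'sm.prodMk hycsm))
    set h : ℝ → EReal := fun t => if t ∈ Sm then ((g0 t : ℝ) : EReal) else ⊤ with hh
    have hhm : Measurable h :=
      Measurable.ite hSmeas (measurable_coe_real_ereal.comp hg0sm.measurable) measurable_const
    have heq : h =ᵐ[ν] fun t =>
        (if y t ∈ C t then
          ((⟪v t, y t - x t⟫ + ‖v t‖ / (2 * ρ.toReal) * ‖y t - x t‖ ^ 2 : ℝ) : EReal)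
        else (⊤ : EReal)) := by
      filter_upwards [hae_Icc, hvv'] with t ht hvt
      have hval : (⟪v t, y t - x t⟫ + ‖v t‖ / (2 * ρ.toReal) * ‖y t - x t‖ ^ 2 : ℝ) = g0 t := by
        simp only [hg0, hGdef]
        rw [hvt, hxx' t ht, ← hyceq t ht]
      by_cases hyC : y t ∈ C t
      · simp only [hh]
        rw [if_pos ((hSiff t ht).1 hyC), if_pos hyC, hval]
      · simp only [hh]
        rw [if_neg (fun hc => hyC ((hSiff t ht).2 hc)), if_neg hyC]
    exact hhm.nullMeasurable.congr heq
  · -- part 2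
    set m : ℝ → EReal := fun t =>
      if t ∈ Icc (0:ℝ) T then
        (⨅ z : H, if z ∈ C t then ((G (v' t, x' t, z) : ℝ) : EReal) else ⊤)
      else ⊤ with hm
    have hmmeas : Measurable m := by
      apply measurable_of_Iio
      intro r
      induction r using EReal.rec with
      | bot =>
        convert MeasurableSet.empty
        ext t
        simp
      | coe r =>
        have hpre : m ⁻¹' Iio (r : EReal) =
            {t : ℝ | t ∈ Icc (0:ℝ) T ∧ ∃ z ∈ C t, G (v' t, x' t, z) < r} := by
          ext t
          simp only [mem_preimage, mem_Iio, mem_setOf_eq, hm]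
          by_cases ht : t ∈ Icc (0:ℝ) T
          · rw [if_pos ht, iInf_lt_iff]
            constructor
            · rintro ⟨z, hz⟩
              by_cases hzC : z ∈ C t
              · rw [if_pos hzC] at hz
                exact ⟨ht, z, hzC, EReal.coe_lt_coe_iff.1 hz⟩
              · rw [if_neg hzC] at hz
                exact absurd hz not_top_lt
            · rintro ⟨-, z, hzC, hzlt⟩
              exact ⟨z, by rw [if_pos hzC]; exact EReal.coe_lt_coe_iff.2 hzlt⟩
          · rw [if_neg ht]
            simp [ht]
        rw [hpre]
        exact measurableSet_slab T C hC2 G hGc r v' x' hv'sm hx'sm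
      | top =>
        have hpre : m ⁻¹' Iio (⊤ : EReal) = Icc (0:ℝ) T := by
          ext t
          simp only [mem_preimage, mem_Iio, hm]
          by_cases ht : t ∈ Icc (0:ℝ) T
          · rw [if_pos ht]
            simp only [ht, iff_true]
            rw [iInf_lt_iff]
            obtain ⟨z, hz⟩ := (hC1 t ht).1
            exact ⟨z, by rw [if_pos hz]; exact EReal.coe_lt_top _⟩
          · rw [if_neg ht]
            simp [ht]
        rw [hpre]
        exact measurableSet_Icc
    have heq : m =ᵐ[ν] fun t => ⨅ z : H,
        (if z ∈ C t then
          ((⟪v t, z - x t⟫ + ‖v t‖ / (2 * ρ.toReal) * ‖z - x t‖ ^ 2 : ℝ) : EReal)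
        else (⊤ : EReal)) := by
      filter_upwards [hae_Icc, hvv'] with t ht hvt
      simp only [hm]
      rw [if_pos ht]
      refine iInf_congr fun z => ?_
      have hval : (⟪v t, z - x t⟫ + ‖v t‖ / (2 * ρ.toReal) * ‖z - x t‖ ^ 2 : ℝ)
          = G (v' t, x' t, z) := by
        simp only [hGdef]
        rw [hvt, hxx' t ht]
      rw [hval]
    exact hmmeas.nullMeasurable.congr heq
end

section
/- Let H be a real Hilbert space, T > 0, ρ ∈ (0,∞], and let C : [0,T] ⇉ H satisfy (H₁), (H₂), and (H₃). Let x : [0,T] → H be an admissible trajectory for C, and assume its differential measure dx is absolutely continuous with respect to a complete positive Radon measure ν on [0,T], with density v ∈ L¹_ν([0,T];H). Then the class A_ν of continuous maps y : [0,T] → H with y(t) ∈ C(t) for ν-a.e. t ∈ [0,T] is nonempty, and the variational residual satisfies E_ν(x) ≤ 0; that is, for every ε > 0 there exists y ∈ A_ν such that ∫₀ᵀ [⟨v(t), y(t) − x(t)⟩ + (‖v(t)‖/(2ρ))‖y(t) − x(t)‖²] dν(t) < ε. -/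
open MeasureTheory Set Metric Filter Topology
open scoped RealInnerProductSpace ENNReal

/-! The measure `μ = ‖v‖ ν` controls the increments of `x`: `‖x t - x s‖ ≤ μ (s, t]`. So `x` is
left-continuous at every point that is not an atom of `μ`. Removing from `[0, T]` an open set `U`
of small `μ`-measure that contains a left neighbourhood of each of the countably many atoms leaves a
compact set `K` on which `x` is continuous (right-continuity is assumed). Extending `x|K` by (H₃)
yields a continuous selection `y` with `y = x` on `K` and `‖y - x‖` bounded independently of `ε`;
the integrand vanishes on `K` and is `O(‖v‖)` on `U`, so the residual is `O(μ U)`. -/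

theorem tendsto_measure_Ioo_nhdsLT (μ : Measure ℝ) [IsLocallyFiniteMeasure μ] (a : ℝ) :
    Tendsto (fun u => μ (Ioo u a)) (𝓝[<] a) (𝓝 0) := by
  -- in `ℝᵒᵈ` the filter `𝓝[>] a` of `tendsto_measure_biInter_gt` is `𝓝[<] a`
  have h := tendsto_measure_biInter_gt (μ := μ) (ι := ℝᵒᵈ) (a := OrderDual.toDual a)
    (s := fun u => Ioo (OrderDual.ofDual u) a) (fun _ _ => measurableSet_Ioo.nullMeasurableSet)
    (fun _ _ _ hij => Ioo_subset_Ioo_left hij)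
    ⟨OrderDual.toDual (a - 1), OrderDual.toDual_lt_toDual.2 (sub_one_lt a),
      measure_Ioo_lt_top.ne⟩
  have hempty : (⋂ r > OrderDual.toDual a, Ioo (OrderDual.ofDual r) a) = ∅ :=
    eq_empty_of_forall_notMem fun t ht => by
      have hta := (mem_iInter₂.1 ht (OrderDual.toDual (a - 1))
        (OrderDual.toDual_lt_toDual.2 (sub_one_lt a))).2
      exact lt_irrefl t (mem_iInter₂.1 ht (OrderDual.toDual t)
        (OrderDual.toDual_lt_toDual.2 hta)).1
  rwa [hempty, measure_empty] at h

theorem exists_isOpen_measure_lt_forall_Ioo_subset (μ : Measure ℝ) [IsLocallyFiniteMeasure μ]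
    {A : Set ℝ} (hA : A.Countable) {ε : ℝ≥0∞} (hε : ε ≠ 0) :
    ∃ U : Set ℝ, IsOpen U ∧ μ U < ε ∧ ∀ a ∈ A, ∃ u < a, Ioo u a ⊆ U := by
  have := hA.to_subtype
  obtain ⟨δ, hδ, hδε⟩ := ENNReal.exists_pos_sum_of_countable' hε A
  have hu : ∀ a : A, ∃ u < (a : ℝ), μ (Ioo u a) < δ a := fun a =>
    (((tendsto_measure_Ioo_nhdsLT μ a).eventually (gt_mem_nhds (hδ a))).and
      self_mem_nhdsWithin).exists.imp fun _ h => ⟨h.2, h.1⟩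
  choose u hua hμu using hu
  refine ⟨⋃ a : A, Ioo (u a) a, isOpen_iUnion fun _ => isOpen_Ioo, ?_,
    fun a ha => ⟨u ⟨a, ha⟩, hua _, subset_iUnion_of_subset ⟨a, ha⟩ subset_rfl⟩⟩
  calc μ (⋃ a : A, Ioo (u a) a) ≤ ∑' a, μ (Ioo (u a) a) := measure_iUnion_le _
    _ ≤ ∑' a, δ a := ENNReal.tsum_le_tsum fun a => (hμu a).le
    _ < ε := hδε

section IncrementsDominatedByMeasure

variable {E : Type*} [PseudoEMetricSpace E] {μ : Measure ℝ} {x : ℝ → E} {I U : Set ℝ}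

theorem continuousWithinAt_Iio_of_edist_le_measure [IsLocallyFiniteMeasure μ]
    (hx : ∀ s ∈ I, ∀ t ∈ I, s ≤ t → edist (x s) (x t) ≤ μ (Ioc s t)) {s : ℝ} (hs : s ∈ I)
    (hμs : μ {s} = 0) : ContinuousWithinAt x (I ∩ Iio s) s := by
  rw [ContinuousWithinAt, tendsto_iff_edist_tendsto_0]
  refine tendsto_of_tendsto_of_tendsto_of_le_of_le' tendsto_const_nhds
    ((tendsto_measure_Ioo_nhdsLT μ s).mono_left (nhdsWithin_mono _ inter_subset_right))
    (Eventually.of_forall fun _ => zero_le) ?_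
  filter_upwards [self_mem_nhdsWithin] with u ⟨huI, hus⟩
  calc edist (x u) (x s) ≤ μ (Ioc u s) := hx u huI s hs hus.le
    _ = μ (Ioo u s ∪ {s}) := by rw [Ioo_union_right hus]
    _ ≤ μ (Ioo u s) + μ {s} := measure_union_le _ _
    _ = μ (Ioo u s) := by rw [hμs, add_zero]

theorem continuousOn_diff_of_edist_le_measure [IsLocallyFiniteMeasure μ]
    (hx : ∀ s ∈ I, ∀ t ∈ I, s ≤ t → edist (x s) (x t) ≤ μ (Ioc s t))
    (hright : ∀ t ∈ I, ContinuousWithinAt x (Ici t) t)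
    (hU : ∀ a ∈ I, μ {a} ≠ 0 → ∃ u < a, Ioo u a ⊆ U) : ContinuousOn x (I \ U) := by
  rintro s ⟨hsI, -⟩
  have hleft : ContinuousWithinAt x (I \ U ∩ Iio s) s := by
    by_cases hμs : μ {s} = 0
    · exact (continuousWithinAt_Iio_of_edist_le_measure hx hsI hμs).mono
        (inter_subset_inter_left _ sdiff_subset)
    · obtain ⟨u, hus, hsub⟩ := hU s hsI hμs
      refine (continuousWithinAt_of_notMem_closure ?_ : ContinuousWithinAt x (Iic u) s).mono ?_
      · rwa [closure_Iic, mem_Iic, not_le]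
      · rintro t ⟨⟨-, htU⟩, hts⟩
        by_contra htu
        exact htU (hsub ⟨not_le.1 htu, hts⟩)
  refine (hleft.union (hright s hsI)).mono fun t ht => ?_
  rcases lt_or_ge t s with h | h
  exacts [Or.inl ⟨ht, h⟩, Or.inr h]

theorem exists_isOpen_measure_lt_continuousOn_diff [IsLocallyFiniteMeasure μ]
    (hx : ∀ s ∈ I, ∀ t ∈ I, s ≤ t → edist (x s) (x t) ≤ μ (Ioc s t))
    (hright : ∀ t ∈ I, ContinuousWithinAt x (Ici t) t) {ε : ℝ≥0∞} (hε : ε ≠ 0) :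
    ∃ U : Set ℝ, IsOpen U ∧ μ U < ε ∧ ContinuousOn x (I \ U) := by
  have hatoms : {a : ℝ | μ {a} ≠ 0}.Countable := by
    simpa only [pos_iff_ne_zero] using Measure.countable_meas_pos_of_disjoint_iUnion (μ := μ)
      measurableSet_singleton fun a b hab => disjoint_singleton.2 hab
  obtain ⟨U, hUo, hUμ, hU⟩ := exists_isOpen_measure_lt_forall_Ioo_subset μ hatoms hε
  exact ⟨U, hUo, hUμ, continuousOn_diff_of_edist_le_measure hx hright fun a _ ha => hU a ha⟩

end IncrementsDominatedByMeasure

theorem stronglyMeasurable_setIntegral_Ioc {E : Type*} [NormedAddCommGroup E] [NormedSpace ℝ E]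
    {ν : Measure ℝ} [SFinite ν] {w : ℝ → E} (hw : StronglyMeasurable w) (a : ℝ) :
    StronglyMeasurable fun t => ∫ s in Ioc a t, w s ∂ν := by
  have hset : MeasurableSet {p : ℝ × ℝ | p.2 ∈ Ioc a p.1} :=
    (measurableSet_lt measurable_const measurable_snd).inter
      (measurableSet_le measurable_snd measurable_fst)
  convert ((hw.comp_measurable measurable_snd).indicator hset).integral_prod_right' (ν := ν)
    using 2 with t
  rw [← integral_indicator measurableSet_Ioc]
  rfl

theorem setIntegral_norm_eq_measureReal_withDensity {α E : Type*} [MeasurableSpace α]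
    [NormedAddCommGroup E] {ν : Measure α} {v : α → E} (hv : AEStronglyMeasurable v ν)
    {S : Set α} (hS : MeasurableSet S) :
    ∫ t in S, ‖v t‖ ∂ν = (ν.withDensity (‖v ·‖ₑ)).real S := by
  rw [measureReal_def, withDensity_apply _ hS, integral_norm_eq_lintegral_enorm hv.restrict]

theorem setIntegral_le_setIntegral_inter_of_abs_le {α : Type*} [MeasurableSpace α]
    {ν : Measure α} {I U : Set α} {f φ : α → ℝ} (hI : MeasurableSet I) (hU : MeasurableSet U)
    (hf : AEStronglyMeasurable f (ν.restrict I)) (hφ : IntegrableOn φ I ν)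
    (hfφ : ∀ t ∈ I, |f t| ≤ φ t) (hf0 : ∀ t ∈ I \ U, f t = 0) :
    ∫ t in I, f t ∂ν ≤ ∫ t in I ∩ U, φ t ∂ν := by
  have hfi : IntegrableOn f I ν :=
    hφ.mono' hf (ae_restrict_of_forall_mem hI fun t ht => (Real.norm_eq_abs _).trans_le (hfφ t ht))
  rw [← setIntegral_indicator hU]
  refine setIntegral_mono_on hfi (hφ.indicator hU) hI fun t ht => ?_
  by_cases htU : t ∈ U
  · rw [indicator_of_mem htU]
    exact (le_abs_self _).trans (hfφ t ht)
  · rw [indicator_of_notMem htU, hf0 t ⟨ht, htU⟩]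

theorem abs_inner_add_div_mul_sq_le {H : Type*} [NormedAddCommGroup H] [InnerProductSpace ℝ H]
    {r B : ℝ} (hr : 0 ≤ r) (v d : H) (hd : ‖d‖ ≤ B) :
    |⟪v, d⟫ + ‖v‖ / r * ‖d‖ ^ 2| ≤ (B + B ^ 2 / r) * ‖v‖ := by
  calc |⟪v, d⟫ + ‖v‖ / r * ‖d‖ ^ 2| ≤ |⟪v, d⟫| + |‖v‖ / r * ‖d‖ ^ 2| := abs_add_le _ _
    _ ≤ ‖v‖ * B + ‖v‖ / r * B ^ 2 := by
        rw [abs_of_nonneg (by positivity : 0 ≤ ‖v‖ / r * ‖d‖ ^ 2)]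
        gcongr
        exact (abs_real_inner_le_norm v d).trans (by gcongr)
    _ = (B + B ^ 2 / r) * ‖v‖ := by ring

theorem setIntegral_inner_add_div_mul_sq_le {H : Type*} [NormedAddCommGroup H]
    [InnerProductSpace ℝ H] {ν : Measure ℝ} {I U : Set ℝ} {x y v : ℝ → H} {r B : ℝ}
    (hI : MeasurableSet I) (hU : MeasurableSet U) (hr : 0 ≤ r) (hv : Integrable v ν)
    (hx : AEStronglyMeasurable x (ν.restrict I)) (hy : AEStronglyMeasurable y (ν.restrict I))
    (hB : ∀ t ∈ I, ‖y t - x t‖ ≤ B) (hyx : ∀ t ∈ I \ U, y t = x t) :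
    ∫ t in I, (⟪v t, y t - x t⟫ + ‖v t‖ / r * ‖y t - x t‖ ^ 2) ∂ν ≤
      (B + B ^ 2 / r) * (ν.withDensity (‖v ·‖ₑ)).real (I ∩ U) := by
  have hd := hy.sub hx
  calc _ ≤ ∫ t in I ∩ U, (B + B ^ 2 / r) * ‖v t‖ ∂ν :=
        setIntegral_le_setIntegral_inter_of_abs_le hI hU
          ((hv.1.restrict.inner hd).add
            ((hv.1.restrict.norm.div₀ aestronglyMeasurable_const).mul (hd.norm.pow 2)))
          (hv.norm.const_mul _).integrableOn
          (fun t ht => abs_inner_add_div_mul_sq_le hr _ _ (hB t ht))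
          fun t ht => by simp [hyx t ht]
    _ = _ := by
        rw [integral_const_mul, setIntegral_norm_eq_measureReal_withDensity hv.1 (hI.inter hU)]

namespace HasDensity

variable {E : Type*} [NormedAddCommGroup E] [NormedSpace ℝ E] {T : ℝ} {ν : Measure ℝ}
  {x v : ℝ → E}

theorem sub_eq_setIntegral (h : HasDensity T ν x v) {s t : ℝ} (hs : s ∈ Icc 0 T)
    (ht : t ∈ Icc 0 T) (hst : s ≤ t) : x t - x s = ∫ u in Ioc s t, v u ∂ν := by
  rw [h.2 t ht, h.2 s hs, ← Ioc_union_Ioc_eq_Ioc hs.1 hst,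
    setIntegral_union (Ioc_disjoint_Ioc_of_le le_rfl) measurableSet_Ioc h.1.integrableOn
      h.1.integrableOn]
  abel

theorem edist_le_withDensity (h : HasDensity T ν x v) {s t : ℝ} (hs : s ∈ Icc 0 T)
    (ht : t ∈ Icc 0 T) (hst : s ≤ t) :
    edist (x s) (x t) ≤ ν.withDensity (‖v ·‖ₑ) (Ioc s t) := by
  rw [edist_comm, edist_eq_enorm_sub, h.sub_eq_setIntegral hs ht hst,
    withDensity_apply _ measurableSet_Ioc]
  exact enorm_integral_le_lintegral_enorm _

theorem norm_le (h : HasDensity T ν x v) {t : ℝ} (ht : t ∈ Icc 0 T) :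
    ‖x t‖ ≤ ‖x 0‖ + ∫ u, ‖v u‖ ∂ν := by
  rw [h.2 t ht]
  calc ‖x 0 + ∫ u in Ioc 0 t, v u ∂ν‖ ≤ ‖x 0‖ + ‖∫ u in Ioc 0 t, v u ∂ν‖ := norm_add_le _ _
    _ ≤ ‖x 0‖ + ∫ u in Ioc 0 t, ‖v u‖ ∂ν := by grw [norm_integral_le_integral_norm]
    _ ≤ ‖x 0‖ + ∫ u, ‖v u‖ ∂ν := by
        grw [setIntegral_le_integral h.1.norm (Eventually.of_forall fun _ => norm_nonneg _)]

theorem aestronglyMeasurable [SFinite ν] (h : HasDensity T ν x v) :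
    AEStronglyMeasurable x (ν.restrict (Icc 0 T)) := by
  refine ((stronglyMeasurable_const (b := x 0)).add (stronglyMeasurable_setIntegral_Ioc (ν := ν)
    h.1.1.stronglyMeasurable_mk 0)).aestronglyMeasurable.congr
    (ae_restrict_of_forall_mem measurableSet_Icc fun t ht => ?_)
  rw [h.2 t ht, integral_congr_ae (ae_restrict_of_ae h.1.1.ae_eq_mk)]
  rfl

end HasDensity

theorem testClass_nonempty_and_residual_nonpos_general
    {H : Type*} [NormedAddCommGroup H] [InnerProductSpace ℝ H]
    (T : ℝ) (ρ : ℝ≥0∞) (C : ℝ → Set H)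
    (hC3 : SelectionExtension C T)
    (ν : Measure ℝ) (hν : IsRadonOn ν T)
    (x v : ℝ → H) (hadm : AdmissibleTrajectory C T x) (hdens : HasDensity T ν x v) :
    (∃ y : ℝ → H, ContinuousOn y (Icc (0:ℝ) T) ∧ ∀ᵐ t ∂ν, y t ∈ C t) ∧
      ∀ ε : ℝ, 0 < ε → ∃ y : ℝ → H, ContinuousOn y (Icc (0:ℝ) T) ∧
        (∀ᵐ t ∂ν, y t ∈ C t) ∧
        ∫ t in Icc (0:ℝ) T,
          (⟪v t, y t - x t⟫ + ‖v t‖ / (2 * ρ.toReal) * ‖y t - x t‖ ^ 2) ∂ν < ε := by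
  obtain ⟨_, -, hνI⟩ := hν
  have hI : ∀ᵐ t ∂ν, t ∈ Icc 0 T := mem_ae_iff.2 hνI
  have hae : ∀ y : ℝ → H, (∀ t ∈ Icc 0 T, y t ∈ C t) → ∀ᵐ t ∂ν, y t ∈ C t :=
    fun y hy => hI.mono hy
  obtain ⟨R, hR, hext⟩ := hC3 x ⟨_, fun t ht => hdens.norm_le ht⟩ hadm.2.2.2 1 one_pos
  obtain ⟨y₀, hy₀, hy₀C, -⟩ := hext ∅ isCompact_empty (empty_subset _) x (continuousOn_empty _)
    (by simp) (by simp)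
  refine ⟨⟨y₀, hy₀, hae y₀ hy₀C⟩, fun ε hε => ?_⟩
  set B := R + (‖x 0‖ + ∫ u, ‖v u‖ ∂ν)
  set c := B + B ^ 2 / (2 * ρ.toReal)
  have hc : 0 ≤ c := by positivity
  have : IsFiniteMeasure (ν.withDensity (‖v ·‖ₑ)) := isFiniteMeasure_withDensity hdens.1.2.ne
  obtain ⟨U, hUo, hUμ, hxU⟩ := exists_isOpen_measure_lt_continuousOn_diff
    (fun s hs t ht => hdens.edist_le_withDensity hs ht) hadm.1
    (ENNReal.ofReal_pos.2 (by positivity : 0 < ε / (c + 1))).ne'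
  obtain ⟨y, hy, hyC, hyx, hyR⟩ := hext (Icc 0 T \ U)
    (isCompact_Icc.diff hUo) sdiff_subset x hxU (fun t ht => hadm.2.2.2 t ht.1) (by simp)
  refine ⟨y, hy, hae y hyC, ?_⟩
  calc _ ≤ c * (ν.withDensity (‖v ·‖ₑ)).real (Icc 0 T ∩ U) :=
        setIntegral_inner_add_div_mul_sq_le measurableSet_Icc hUo.measurableSet (by positivity)
          hdens.1 hdens.aestronglyMeasurable (hy.aestronglyMeasurable measurableSet_Icc)
          (fun t ht => (norm_sub_le _ _).trans (add_le_add (hyR t ht) (hdens.norm_le ht))) hyx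
    _ ≤ c * (ε / (c + 1)) := by
        gcongr
        exact ENNReal.toReal_le_of_le_ofReal (by positivity)
          ((measure_mono inter_subset_right).trans hUμ.le)
    _ < ε := by
        rw [← mul_div_assoc, div_lt_iff₀ (by positivity)]
        nlinarith

/-- Under (H₁)-(H₃), for any admissible trajectory `x` whose differential
measure has density `v` w.r.t. a Radon measure `ν` on `[0,T]`, the class `A_ν` of
continuous a.e.-selections of `C` is nonempty, and the variational residual satisfies
`E_ν(x) ≤ 0`: for every `ε > 0` some test trajectory makes the integral `< ε`. -/
theorem testClass_nonempty_and_residual_nonpos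
    {H : Type*} [NormedAddCommGroup H] [InnerProductSpace ℝ H] [CompleteSpace H]
    (T : ℝ) (hT : 0 < T) (ρ : ℝ≥0∞) (hρ : 0 < ρ) (C : ℝ → Set H)
    (hC1 : HypH1 ρ C T) (hC2 : LscOn C (Icc (0:ℝ) T)) (hC3 : SelectionExtension C T)
    (ν : Measure ℝ) (hν : IsRadonOn ν T)
    (x v : ℝ → H) (hadm : AdmissibleTrajectory C T x) (hdens : HasDensity T ν x v) :
    (∃ y : ℝ → H, ContinuousOn y (Icc (0:ℝ) T) ∧ ∀ᵐ t ∂ν, y t ∈ C t) ∧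
      ∀ ε : ℝ, 0 < ε → ∃ y : ℝ → H, ContinuousOn y (Icc (0:ℝ) T) ∧
        (∀ᵐ t ∂ν, y t ∈ C t) ∧
        ∫ t in Icc (0:ℝ) T,
          (⟪v t, y t - x t⟫ + ‖v t‖ / (2 * ρ.toReal) * ‖y t - x t‖ ^ 2) ∂ν < ε :=
  testClass_nonempty_and_residual_nonpos_general T ρ C hC3 ν hν x v hadm hdens
end

section
/- Let H be a real Hilbert space, T > 0, ρ ∈ (0,∞], and let C : [0,T] ⇉ H be a set-valued map such that C(t) is nonempty, closed, and ρ-uniformly prox-regular for every t ∈ [0,T]. Let ν be a complete positive Radon measure on [0,T], let x : [0,T] → H be an admissible trajectory for C whose differential measure dx is absolutely continuous with respect to ν with density v ∈ L¹_ν([0,T];H), and assume −v(t) ∈ N^P(C(t); x(t)) for ν-a.e. t ∈ [0,T]. Then for every continuous y : [0,T] → H with y(t) ∈ C(t) for ν-a.e. t, one has ∫₀ᵀ [⟨v(t), y(t) − x(t)⟩ + (‖v(t)‖/(2ρ))‖y(t) − x(t)‖²] dν(t) ≥ 0; in other words, x is an integral solution of the sweeping process. -/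
open MeasureTheory Set Metric Filter Topology
open scoped RealInnerProductSpace ENNReal

/-- If `x` is an admissible trajectory with density `v` w.r.t. `ν` and
`-v(t) ∈ N^P(C(t); x(t))` for `ν`-a.e. `t`, then the prox-regular integral inequality holds
against every continuous a.e.-selection of `C`: `x` is an integral solution. -/
theorem integralIneq_of_normalConeInclusion
    {H : Type*} [NormedAddCommGroup H] [InnerProductSpace ℝ H] [CompleteSpace H]
    (T : ℝ) (hT : 0 < T) (ρ : ℝ≥0∞) (hρ : 0 < ρ) (C : ℝ → Set H)
    (hC : ∀ t ∈ Icc (0:ℝ) T, (C t).Nonempty ∧ IsClosed (C t) ∧ UniformlyProxRegular ρ (C t))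
    (ν : Measure ℝ) (hν : IsRadonOn ν T)
    (x v : ℝ → H) (hadm : AdmissibleTrajectory C T x) (hdens : HasDensity T ν x v)
    (hincl : ∀ᵐ t ∂ν, -v t ∈ ProxNormalCone (C t) (x t)) :
    ∀ y : ℝ → H, ContinuousOn y (Icc (0:ℝ) T) → (∀ᵐ t ∂ν, y t ∈ C t) →
      0 ≤ ∫ t in Icc (0:ℝ) T,
        (⟪v t, y t - x t⟫ + ‖v t‖ / (2 * ρ.toReal) * ‖y t - x t‖ ^ 2) ∂ν := by
  intro y hy hyC
  apply integral_nonneg_of_ae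
  have h1 : ∀ᵐ t ∂ν.restrict (Icc (0:ℝ) T), -v t ∈ ProxNormalCone (C t) (x t) :=
    ae_restrict_of_ae hincl
  have h2 : ∀ᵐ t ∂ν.restrict (Icc (0:ℝ) T), y t ∈ C t := ae_restrict_of_ae hyC
  have h3 : ∀ᵐ t ∂ν.restrict (Icc (0:ℝ) T), t ∈ Icc (0:ℝ) T :=
    ae_restrict_mem measurableSet_Icc
  filter_upwards [h1, h2, h3] with t ht1 ht2 ht3
  have hpr := (hC t ht3).2.2
  have hx : x t ∈ C t := hadm.2.2.2 t ht3
  have := hpr (x t) hx (-v t) ht1 (y t) ht2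
  rw [inner_neg_left, norm_neg] at this
  simp only [Pi.zero_apply]
  linarith
end
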